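/- arXiv:1605.07534 — 8 statements merged into one kernel-verified Lean document; each statement's English description precedes it below -/
import Mathlib

section
/- Every 4-dimensional real nilpotent Lie algebra 𝔤 admits a basis e₁, e₂, e₃, e₄ such that one of the following holds (all brackets among basis vectors other than those listed, and those forced by antisymmetry, are zero): (a) all brackets of basis vectors vanish, so 𝔤 ≅ ℝ⁴; (b) the only nonzero bracket among basis vectors is ⁅e₃, e₂⁆ = e₁, so 𝔤 ≅ ℝ ⊕ 𝔥₃; (c) the only nonzero brackets among basis vectors are ⁅e₄, e₃⁆ = e₂ and ⁅e₄, e₂⁆ = e₁, so 𝔤 ≅ 𝔫₄. -/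
/-!
Write `𝔤¹ = ⁅𝔤, 𝔤⁆` and `𝔤² = ⁅𝔤, 𝔤¹⁆`. In a nilpotent Lie algebra the lower central series
strictly decreases until it vanishes, and its last nonzero term is central. If
`𝔤 = span {u, v} + 𝔤¹`, then expanding brackets gives `𝔤¹ ⊆ K ⁅u, v⁆ + 𝔤²`; taking `v = u` shows
that a nonzero `𝔤¹` has codimension at least two, so `dim 𝔤¹ ∈ {0, 1, 2}`.

If `dim 𝔤¹ = 1`, then `𝔤¹ = K z` with `z = ⁅x, y⁆` central, and correcting a fourth vector by
multiples of `x` and `y` makes it central. If `dim 𝔤¹ = 2`, then `𝔤²` is a central line, and for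
`(e₄, t) = (u, v)` or `(v, u)` the vector `z = ⁅e₄, ⁅e₄, t⁆⁆` is nonzero (otherwise `⁅u, v⁆`, hence
all of `𝔤¹`, would be central and `𝔤²` would vanish). With `w = ⁅e₄, t⁆` and `⁅t, w⁆ = β z`,
the vectors `z, w, t - β e₄, e₄` have the brackets of `𝔫₄`.
-/

open Module LieModule

namespace Submodule

variable {K V : Type*} [Field K] [AddCommGroup V] [Module K V] [FiniteDimensional K V]

lemma exists_sup_span_singleton_eq_top (W : Submodule K V) (h : finrank K V ≤ finrank K W + 1) :
    ∃ u, W ⊔ K ∙ u = ⊤ := by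
  by_cases hW : W = ⊤
  · exact ⟨0, by simp [hW]⟩
  obtain ⟨u, -, hu⟩ := SetLike.exists_of_lt (lt_top_iff_ne_top.mpr hW)
  refine ⟨u, eq_top_of_finrank_eq (le_antisymm (finrank_le _) ?_)⟩
  rwa [finrank_sup_span_singleton hu]

lemma exists_sup_span_pair_eq_top (W : Submodule K V) (h : finrank K V ≤ finrank K W + 2) :
    ∃ u v, W ⊔ span K {u, v} = ⊤ := by
  by_cases hW : W = ⊤
  · exact ⟨0, 0, by simp [hW]⟩
  obtain ⟨u, -, hu⟩ := SetLike.exists_of_lt (lt_top_iff_ne_top.mpr hW)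
  obtain ⟨v, hv⟩ := exists_sup_span_singleton_eq_top (W ⊔ K ∙ u)
    (by rw [finrank_sup_span_singleton hu]; omega)
  exact ⟨u, v, by rwa [span_insert, ← sup_assoc]⟩

end Submodule

namespace LieSubmodule

lemma finrank_eq_zero {K L M : Type*} [Field K] [LieRing L] [AddCommGroup M] [Module K M]
    [LieRingModule L M] [FiniteDimensional K M] {N : LieSubmodule K L M} :
    finrank K N = 0 ↔ N = ⊥ := by
  rw [← toSubmodule_eq_bot, ← Submodule.finrank_eq_zero]
  rfl

end LieSubmodule

namespace LieModule

variable {R L M : Type*} [CommRing R] [LieRing L] [LieAlgebra R L] [AddCommGroup M] [Module R M]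
  [LieRingModule L M]

lemma lie_mem_lowerCentralSeries_succ (x : L) {m : M} {k : ℕ}
    (hm : m ∈ lowerCentralSeries R L M k) : ⁅x, m⁆ ∈ lowerCentralSeries R L M (k + 1) := by
  rw [lowerCentralSeries_succ]
  exact LieSubmodule.lie_mem_lie (LieSubmodule.mem_top x) hm

lemma lowerCentralSeries_le_maxTrivSubmodule [LieModule R L M] {k : ℕ}
    (h : lowerCentralSeries R L M (k + 1) = ⊥) :
    lowerCentralSeries R L M k ≤ maxTrivSubmodule R L M := by
  rwa [le_max_triv_iff_bracket_eq_bot, ← lowerCentralSeries_succ]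

lemma lowerCentralSeries_eq_bot_of_le_succ [LieModule R L M] [IsNilpotent L M] {k : ℕ}
    (h : lowerCentralSeries R L M k ≤ lowerCentralSeries R L M (k + 1)) :
    lowerCentralSeries R L M k = ⊥ := by
  have hle : ∀ n, lowerCentralSeries R L M k ≤ lowerCentralSeries R L M (k + n) := by
    intro n
    induction n with
    | zero => rfl
    | succ n ih =>
      rw [← add_assoc, lowerCentralSeries_succ]
      exact h.trans (lowerCentralSeries_succ R L M k ▸ LieSubmodule.mono_lie_right ⊤ ih)
  obtain ⟨n, hn⟩ := IsNilpotent.nilpotent R L M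
  exact eq_bot_iff.mpr <| hn ▸ (hle n).trans (antitone_lowerCentralSeries R L M (by omega))

lemma finrank_lowerCentralSeries_succ_lt {K : Type*} [Field K] [LieAlgebra K L] [Module K M]
    [LieModule K L M] [FiniteDimensional K M] [IsNilpotent L M] {k : ℕ}
    (h : lowerCentralSeries K L M k ≠ ⊥) :
    finrank K (lowerCentralSeries K L M (k + 1)) < finrank K (lowerCentralSeries K L M k) :=
  Submodule.finrank_lt_finrank_of_lt <| lt_of_le_of_ne
    (antitone_lowerCentralSeries K L M k.le_succ)
    fun heq => h <| lowerCentralSeries_eq_bot_of_le_succ <|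
      ((LieSubmodule.toSubmodule_inj _ _).mp heq).symm.le

end LieModule

namespace LieAlgebra

variable {R L : Type*} [CommRing R] [LieRing L] [LieAlgebra R L]

lemma lowerCentralSeries_one_le_span_lie_sup {u v : L}
    (h : (lowerCentralSeries R L L 1).toSubmodule ⊔ Submodule.span R {u, v} = ⊤) :
    (lowerCentralSeries R L L 1).toSubmodule ≤
      R ∙ ⁅u, v⁆ ⊔ (lowerCentralSeries R L L 2).toSubmodule := by
  have hmem : ∀ x d : L, d ∈ lowerCentralSeries R L L 1 →
      ⁅x, d⁆ ∈ R ∙ ⁅u, v⁆ ⊔ (lowerCentralSeries R L L 2).toSubmodule :=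
    fun x _ hd => Submodule.mem_sup_right (lie_mem_lowerCentralSeries_succ x hd)
  have hbracket : ∀ x y : L, ⁅x, y⁆ ∈ R ∙ ⁅u, v⁆ ⊔ (lowerCentralSeries R L L 2).toSubmodule := by
    intro x y
    obtain ⟨d, hd, a, ha, rfl⟩ := Submodule.mem_sup.mp (h ▸ Submodule.mem_top : x ∈ _)
    obtain ⟨d', hd', b, hb, rfl⟩ := Submodule.mem_sup.mp (h ▸ Submodule.mem_top : y ∈ _)
    have hab : ⁅a, b⁆ ∈ R ∙ ⁅u, v⁆ := by
      obtain ⟨α, β, rfl⟩ := Submodule.mem_span_pair.mp ha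
      obtain ⟨γ, δ, rfl⟩ := Submodule.mem_span_pair.mp hb
      refine Submodule.mem_span_singleton.mpr ⟨α * δ - β * γ, ?_⟩
      simp only [lie_add, add_lie, lie_smul, smul_lie, lie_self, ← lie_skew v u]
      module
    rw [add_lie, lie_add, lie_add, ← lie_skew d b]
    exact add_mem (add_mem (hmem _ _ hd') (neg_mem (hmem _ _ hd)))
      (add_mem (hmem _ _ hd') (Submodule.mem_sup_left hab))
  rw [LieModule.lowerCentralSeries_succ, lowerCentralSeries_zero,
    LieSubmodule.lieIdeal_oper_eq_linear_span', Submodule.span_le]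
  rintro _ ⟨x, -, y, -, rfl⟩
  exact hbracket x y

lemma lie_lie_ne_zero_or {u v : L}
    (h : (lowerCentralSeries R L L 1).toSubmodule ⊔ Submodule.span R {u, v} = ⊤)
    (hC : lowerCentralSeries R L L 2 ≠ ⊥)
    (hCc : lowerCentralSeries R L L 2 ≤ maxTrivSubmodule R L L) :
    ⁅u, ⁅u, v⁆⁆ ≠ 0 ∨ ⁅v, ⁅v, u⁆⁆ ≠ 0 := by
  by_contra! huv
  have hcen : ⁅u, v⁆ ∈ maxTrivSubmodule R L L := by
    suffices ⊤ ≤ LinearMap.ker (ad R L ⁅u, v⁆) from (mem_maxTrivSubmodule R L L _).mpr fun x => by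
      rw [← lie_skew, neg_eq_zero]
      exact this Submodule.mem_top
    rw [← h]
    refine sup_le ((lowerCentralSeries_one_le_span_lie_sup h).trans (sup_le ?_ ?_)) ?_
    · rw [Submodule.span_singleton_le_iff_mem, LinearMap.mem_ker, ad_apply, lie_self]
    · intro c hc
      exact (mem_maxTrivSubmodule R L L c).mp (hCc hc) _
    · rw [Submodule.span_le, Set.insert_subset_iff, Set.singleton_subset_iff]
      refine ⟨?_, ?_⟩
      · rw [SetLike.mem_coe, LinearMap.mem_ker, ad_apply, ← lie_skew, huv.1, neg_zero]
      · rw [SetLike.mem_coe, LinearMap.mem_ker, ad_apply, ← lie_skew, ← lie_skew u v, lie_neg,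
          neg_neg, huv.2]
  apply hC
  rw [LieModule.lowerCentralSeries_succ, ← le_max_triv_iff_bracket_eq_bot,
    ← LieSubmodule.toSubmodule_le_toSubmodule]
  refine (lowerCentralSeries_one_le_span_lie_sup h).trans (sup_le ?_ hCc)
  rwa [Submodule.span_singleton_le_iff_mem]

section Field

variable {K : Type*} [Field K] [LieAlgebra K L]

lemma linearIndependent_heisenberg {x y z : L} (hxy : ⁅x, y⁆ = z)
    (hz : z ∈ maxTrivSubmodule K L L) (hz0 : z ≠ 0) : LinearIndependent K ![z, y, x] := by
  have hxz := (mem_maxTrivSubmodule K L L z).mp hz x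
  have hyz := (mem_maxTrivSubmodule K L L z).mp hz y
  rw [Fintype.linearIndependent_iff]
  intro g hg
  simp only [Fin.sum_univ_three, Matrix.cons_val_zero, Matrix.cons_val_one,
    Matrix.cons_val_two, Matrix.head_cons, Matrix.tail_cons] at hg
  have h1 : g 1 = 0 := by
    simpa [hxy, hxz, hz0] using congrArg (⁅x, ·⁆) hg
  have h2 : g 2 = 0 := by
    simpa [← lie_skew y x, hxy, hyz, hz0] using congrArg (⁅y, ·⁆) hg
  have h0 : g 0 = 0 := by
    simpa [h1, h2, hz0] using hg
  intro i
  fin_cases i <;> assumption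

lemma linearIndependent_n4 {z w e₃ e₄ : L} (h₃ : ⁅e₄, e₃⁆ = w) (hw : ⁅e₄, w⁆ = z)
    (hz : z ∈ maxTrivSubmodule K L L) (hz0 : z ≠ 0) : LinearIndependent K ![z, w, e₃, e₄] := by
  have h₄z := (mem_maxTrivSubmodule K L L z).mp hz e₄
  have hwz := (mem_maxTrivSubmodule K L L z).mp hz w
  rw [Fintype.linearIndependent_iff]
  intro g hg
  simp only [Fin.sum_univ_four, Matrix.cons_val_zero, Matrix.cons_val_one,
    Matrix.cons_val_two, Matrix.cons_val_three, Matrix.head_cons, Matrix.tail_cons] at hg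
  have h2 : g 2 = 0 := by
    simpa [h₃, hw, h₄z, hz0] using congrArg (fun a => ⁅e₄, ⁅e₄, a⁆⁆) hg
  have h1 : g 1 = 0 := by
    simpa [h₃, hw, h₄z, h2, hz0] using congrArg (⁅e₄, ·⁆) hg
  have h3 : g 3 = 0 := by
    simpa [← lie_skew w e₄, hw, hwz, h1, h2, hz0] using congrArg (⁅w, ·⁆) hg
  have h0 : g 0 = 0 := by
    simpa [h1, h2, h3, hz0] using hg
  intro i
  fin_cases i <;> assumption

variable [FiniteDimensional K L] [LieRing.IsNilpotent L]

lemma lowerCentralSeries_one_eq_bot_of_finrank_le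
    (h : finrank K L ≤ finrank K (lowerCentralSeries K L L 1) + 1) :
    lowerCentralSeries K L L 1 = ⊥ := by
  obtain ⟨u, hu⟩ := (lowerCentralSeries K L L 1).toSubmodule.exists_sup_span_singleton_eq_top h
  apply lowerCentralSeries_eq_bot_of_le_succ
  rw [← LieSubmodule.toSubmodule_le_toSubmodule]
  simpa using lowerCentralSeries_one_le_span_lie_sup (u := u) (v := u)
    (by rwa [Set.pair_eq_singleton])

lemma exists_heisenberg_vectors (hdim : 3 < finrank K L)
    (hD : finrank K (lowerCentralSeries K L L 1) = 1) :
    ∃ z y x w : L, LinearIndependent K ![z, y, x, w] ∧ ⁅x, y⁆ = z ∧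
      z ∈ maxTrivSubmodule K L L ∧ ⁅w, x⁆ = 0 ∧ ⁅w, y⁆ = 0 := by
  have hD0 : lowerCentralSeries K L L 1 ≠ ⊥ := fun h => by
    rw [← LieSubmodule.finrank_eq_zero, hD] at h
    exact one_ne_zero h
  have hC : lowerCentralSeries K L L 2 = ⊥ := by
    have : finrank K (lowerCentralSeries K L L 2) < 1 :=
      (finrank_lowerCentralSeries_succ_lt hD0).trans_eq hD
    rwa [← LieSubmodule.finrank_eq_zero, ← Nat.lt_one_iff]
  obtain ⟨x, y, hxy⟩ : ∃ x y : L, ⁅x, y⁆ ≠ 0 := by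
    by_contra! h
    exact hD0 ((trivial_iff_lower_central_eq_bot K L L).mp ⟨h⟩)
  have hbr : ∀ u v : L, ⁅u, v⁆ ∈ (lowerCentralSeries K L L 1).toSubmodule := fun u v =>
    lie_mem_lowerCentralSeries_succ u (by simp)
  have hDz := eq_span_singleton_of_mem_of_finrank_eq_one hD (hbr x y) hxy
  have hz := lowerCentralSeries_le_maxTrivSubmodule hC (hbr x y)
  obtain ⟨u, hu⟩ : ∃ u, u ∉ Submodule.span K (Set.range ![⁅x, y⁆, y, x]) := by
    by_contra! h
    have hspan := Submodule.eq_top_iff'.mpr h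
    have := finrank_range_le_card (R := K) ![⁅x, y⁆, y, x]
    rw [Set.finrank, hspan, finrank_top, Fintype.card_fin] at this
    omega
  obtain ⟨α, hα⟩ := Submodule.mem_span_singleton.mp (hDz ▸ hbr u x)
  obtain ⟨β, hβ⟩ := Submodule.mem_span_singleton.mp (hDz ▸ hbr u y)
  refine ⟨⁅x, y⁆, y, x, u + α • y - β • x, ?_, rfl, hz, ?_, ?_⟩
  · have hsnoc : (![⁅x, y⁆, y, x, u + α • y - β • x] : Fin 4 → L) =
        Fin.snoc ![⁅x, y⁆, y, x] (u + α • y - β • x) := by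
      ext i; fin_cases i <;> rfl
    rw [hsnoc, linearIndependent_finSnoc]
    refine ⟨linearIndependent_heisenberg rfl hz hxy, fun hw => hu ?_⟩
    rw [show u = u + α • y - β • x - α • y + β • x by abel]
    exact add_mem (sub_mem hw (Submodule.smul_mem _ _ (Submodule.subset_span ⟨1, rfl⟩)))
      (Submodule.smul_mem _ _ (Submodule.subset_span ⟨2, rfl⟩))
  · rw [sub_lie, add_lie, smul_lie, smul_lie, ← hα, lie_self, ← lie_skew y x, smul_neg,
      smul_zero, add_neg_cancel, sub_zero]
  · rw [sub_lie, add_lie, smul_lie, smul_lie, ← hβ, lie_self, smul_zero, add_zero, sub_self]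

lemma exists_n4_vectors (hdim : finrank K L ≤ 4)
    (hD : finrank K (lowerCentralSeries K L L 1) = 2) :
    ∃ z w e₃ e₄ : L, ⁅e₄, e₃⁆ = w ∧ ⁅e₄, w⁆ = z ∧ ⁅e₃, w⁆ = 0 ∧
      z ∈ maxTrivSubmodule K L L ∧ z ≠ 0 := by
  have hD' : finrank K (lowerCentralSeries K L L 1).toSubmodule = 2 := hD
  obtain ⟨u, v, huv⟩ :=
    (lowerCentralSeries K L L 1).toSubmodule.exists_sup_span_pair_eq_top (by omega)
  have hDuv := Submodule.finrank_mono (lowerCentralSeries_one_le_span_lie_sup huv)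
  have hD0 : lowerCentralSeries K L L 1 ≠ ⊥ := fun h => by
    rw [← LieSubmodule.finrank_eq_zero, hD] at h
    exact two_ne_zero h
  have hC : lowerCentralSeries K L L 2 ≠ ⊥ := fun h => by
    rw [h, LieSubmodule.bot_toSubmodule, sup_bot_eq] at hDuv
    have := finrank_span_le_card (R := K) {⁅u, v⁆}
    rw [Set.toFinset_singleton, Finset.card_singleton] at this
    omega
  have hC1 : finrank K (lowerCentralSeries K L L 2) = 1 := by
    have : finrank K (lowerCentralSeries K L L 2) < 2 :=
      (finrank_lowerCentralSeries_succ_lt hD0).trans_eq hD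
    have : finrank K (lowerCentralSeries K L L 2) ≠ 0 := by rwa [Ne, LieSubmodule.finrank_eq_zero]
    omega
  have hCc : lowerCentralSeries K L L 2 ≤ maxTrivSubmodule K L L := by
    apply lowerCentralSeries_le_maxTrivSubmodule
    have : finrank K (lowerCentralSeries K L L 3) < 1 :=
      (finrank_lowerCentralSeries_succ_lt hC).trans_eq hC1
    rwa [← LieSubmodule.finrank_eq_zero, ← Nat.lt_one_iff]
  obtain ⟨e₄, t, hz⟩ : ∃ e₄ t : L, ⁅e₄, ⁅e₄, t⁆⁆ ≠ 0 :=
    (lie_lie_ne_zero_or huv hC hCc).elim (⟨u, v, ·⟩) (⟨v, u, ·⟩)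
  have hwD : ⁅e₄, t⁆ ∈ lowerCentralSeries K L L 1 := lie_mem_lowerCentralSeries_succ e₄ (by simp)
  have hC2 : ∀ a, ⁅a, ⁅e₄, t⁆⁆ ∈ (lowerCentralSeries K L L 2).toSubmodule := fun a =>
    lie_mem_lowerCentralSeries_succ a hwD
  have hCz := eq_span_singleton_of_mem_of_finrank_eq_one hC1 (hC2 e₄) hz
  obtain ⟨β, hβ⟩ := Submodule.mem_span_singleton.mp (hCz ▸ hC2 t)
  refine ⟨_, _, t - β • e₄, e₄, ?_, rfl, ?_, hCc (hC2 e₄), hz⟩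
  · rw [lie_sub, lie_smul, lie_self, smul_zero, sub_zero]
  · rw [sub_lie, smul_lie, hβ, sub_self]

lemma exists_heisenberg_sum_basis (hdim : finrank K L = 4)
    (hD : finrank K (lowerCentralSeries K L L 1) = 1) :
    ∃ b : Module.Basis (Fin 4) K L, ∀ i j : Fin 4, ⁅b i, b j⁆ =
      if (i, j) = (2, 1) then b 0 else if (i, j) = (1, 2) then -b 0 else 0 := by
  obtain ⟨z, y, x, w, hli, hxy, hz, hwx, hwy⟩ := exists_heisenberg_vectors (by omega) hD
  have hz' : ∀ a : L, ⁅a, z⁆ = 0 ∧ ⁅z, a⁆ = 0 := fun a => by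
    have := (mem_maxTrivSubmodule K L L z).mp hz a
    rw [← lie_skew z, this, neg_zero]
    exact ⟨rfl, rfl⟩
  have hyx : ⁅y, x⁆ = -z := by rw [← lie_skew, hxy]
  have hxw : ⁅x, w⁆ = 0 := by rw [← lie_skew, hwx, neg_zero]
  have hyw : ⁅y, w⁆ = 0 := by rw [← lie_skew, hwy, neg_zero]
  refine ⟨basisOfLinearIndependentOfCardEqFinrank hli (by simp [hdim]), fun i j => ?_⟩
  rw [coe_basisOfLinearIndependentOfCardEqFinrank]
  fin_cases i <;> fin_cases j <;> simp [hxy, hz', hwx, hwy, hyx, hxw, hyw]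

lemma exists_n4_basis (hdim : finrank K L = 4)
    (hD : finrank K (lowerCentralSeries K L L 1) = 2) :
    ∃ b : Module.Basis (Fin 4) K L, ∀ i j : Fin 4, ⁅b i, b j⁆ =
      if (i, j) = (3, 2) then b 1 else if (i, j) = (2, 3) then -b 1
      else if (i, j) = (3, 1) then b 0 else if (i, j) = (1, 3) then -b 0 else 0 := by
  obtain ⟨z, w, e₃, e₄, h₃, hw, h₃w, hz, hz0⟩ := exists_n4_vectors hdim.le hD
  have hz' : ∀ a : L, ⁅a, z⁆ = 0 ∧ ⁅z, a⁆ = 0 := fun a => by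
    have := (mem_maxTrivSubmodule K L L z).mp hz a
    rw [← lie_skew z, this, neg_zero]
    exact ⟨rfl, rfl⟩
  have h₃' : ⁅e₃, e₄⁆ = -w := by rw [← lie_skew, h₃]
  have hw' : ⁅w, e₄⁆ = -z := by rw [← lie_skew, hw]
  have h₃w' : ⁅w, e₃⁆ = 0 := by rw [← lie_skew, h₃w, neg_zero]
  have hli := linearIndependent_n4 h₃ hw hz hz0
  refine ⟨basisOfLinearIndependentOfCardEqFinrank hli (by simp [hdim]), fun i j => ?_⟩
  rw [coe_basisOfLinearIndependentOfCardEqFinrank]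
  fin_cases i <;> fin_cases j <;> simp [h₃, hw, h₃w, hz', h₃', hw', h₃w']

end Field

end LieAlgebra

/-- Every 4-dimensional real nilpotent Lie algebra `𝔤` admits a basis
`e₁, e₂, e₃, e₄` (here `b 0, b 1, b 2, b 3`) such that one of the following holds, all
brackets among basis vectors other than those listed (and those forced by
antisymmetry) being zero:
(a) all brackets of basis vectors vanish (`𝔤 ≅ ℝ⁴`);
(b) the only nonzero bracket is `⁅e₃, e₂⁆ = e₁` (`𝔤 ≅ ℝ ⊕ 𝔥₃`);
(c) the only nonzero brackets are `⁅e₄, e₃⁆ = e₂` and `⁅e₄, e₂⁆ = e₁` (`𝔤 ≅ 𝔫₄`). -/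
theorem stmt5
    (L : Type) [LieRing L] [LieAlgebra ℝ L] [FiniteDimensional ℝ L]
    [LieRing.IsNilpotent L]
    (hdim : finrank ℝ L = 4) :
    ∃ b : Basis (Fin 4) ℝ L,
      (∀ i j : Fin 4, ⁅b i, b j⁆ = 0) ∨
      (∀ i j : Fin 4, ⁅b i, b j⁆ =
        if (i, j) = (2, 1) then b 0 else if (i, j) = (1, 2) then -b 0 else 0) ∨
      (∀ i j : Fin 4, ⁅b i, b j⁆ =
        if (i, j) = (3, 2) then b 1 else if (i, j) = (2, 3) then -b 1
        else if (i, j) = (3, 1) then b 0 else if (i, j) = (1, 3) then -b 0 else 0) := by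
  have hD : finrank ℝ (lowerCentralSeries ℝ L L 1) < 3 := by
    by_contra! h
    have := LieSubmodule.finrank_eq_zero.mpr
      (LieAlgebra.lowerCentralSeries_one_eq_bot_of_finrank_le (K := ℝ) (L := L) (by omega))
    omega
  obtain hD | hD | hD : finrank ℝ (lowerCentralSeries ℝ L L 1) = 0 ∨
      finrank ℝ (lowerCentralSeries ℝ L L 1) = 1 ∨ finrank ℝ (lowerCentralSeries ℝ L L 1) = 2 := by
    omega
  · have := (trivial_iff_lower_central_eq_bot ℝ L L).mpr (LieSubmodule.finrank_eq_zero.mp hD)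
    exact ⟨finBasisOfFinrankEq ℝ L hdim, Or.inl fun i j => trivial_lie_zero L L _ _⟩
  · obtain ⟨b, hb⟩ := LieAlgebra.exists_heisenberg_sum_basis hdim hD
    exact ⟨b, Or.inr (Or.inl hb)⟩
  · obtain ⟨b, hb⟩ := LieAlgebra.exists_n4_basis hdim hD
    exact ⟨b, Or.inr (Or.inr hb)⟩
end

section
/- Let 𝔥₃ be the 3-dimensional Heisenberg Lie algebra. The set sDer(𝔥₃) of derivations of 𝔥₃ whose underlying linear map has trace zero is a Lie subalgebra of the Lie algebra Der(𝔥₃) of all derivations; it contains the inner derivations ad(𝔥₃) = {ad(y) : y ∈ 𝔥₃} as a Lie ideal; and the quotient Lie algebra sDer(𝔥₃)/ad(𝔥₃) is isomorphic to sl(2,ℝ). -/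
/-!
A derivation `D` of `𝔥₃` preserves the centre `R ∙ x₁`, and `D x₁ = D ⁅x₃, x₂⁆` forces
`D x₁ = t • x₁` with `t` the trace of the `2 × 2` block `A` of `D` on `x₂, x₃` (the matrix of
the map induced on `𝔥₃ / R ∙ x₁`). Hence `D ↦ A` is a Lie algebra map `Der(𝔥₃) → gl₂`, with
`tr D = 2 tr A`. It is onto, since every `A` extends to a derivation acting on `x₁` by
`tr A`, and its kernel is `ad(𝔥₃)`, since a derivation with `A = 0` maps `x₂, x₃` into the
centre. So the traceless derivations are the preimage of `sl₂`, and the first isomorphism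
theorem gives `sDer(𝔥₃) / ad(𝔥₃) ≃ sl₂`.
-/

variable {R L M : Type*} [CommRing R] [LieRing L] [LieAlgebra R L]

namespace LieDerivation

variable (R L) in
noncomputable def traceless : LieSubalgebra R (LieDerivation R L L) :=
  { LinearMap.ker (LinearMap.trace R L ∘ₗ (toLinearMapLieHom R L : LieDerivation R L L →ₗ[R] _))
    with
    lie_mem' := fun {D E} _ _ => by
      change LinearMap.trace R L ⁅(D : Module.End R L), (E : Module.End R L)⁆ = 0
      rw [Ring.lie_def, map_sub, LinearMap.trace_mul_comm, sub_self] }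

theorem mem_traceless {D : LieDerivation R L L} :
    D ∈ traceless R L ↔ LinearMap.trace R L D.toLinearMap = 0 :=
  Iff.rfl

variable [AddCommGroup M] [Module R M] [LieRingModule L M] [LieModule R L M]

def ofBasis {ι : Type*} (b : Module.Basis ι R L) (f : L →ₗ[R] M)
    (h : ∀ i j, f ⁅b i, b j⁆ = ⁅b i, f (b j)⁆ - ⁅b j, f (b i)⁆) : LieDerivation R L M where
  toLinearMap := f
  leibniz' x y := by
    let ad : L →ₗ[R] L →ₗ[R] L := LieModule.toEnd R L L
    let act : L →ₗ[R] M →ₗ[R] M := LieModule.toEnd R L M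
    have := LinearMap.congr_fun₂ (LinearMap.ext_basis b b (B := ad.compr₂ f)
      (B' := act.compl₂ f - (act.compl₂ f).flip) h) x y
    simpa [ad, act] using this

@[simp]
theorem ofBasis_apply {ι : Type*} (b : Module.Basis ι R L) (f : L →ₗ[R] M) (h) (x : L) :
    ofBasis b f h x = f x :=
  rfl

end LieDerivation

theorem Matrix.submatrix_mul_succ {α l o p q : Type*} [NonUnitalNonAssocSemiring α] {n : ℕ}
    (A : Matrix l (Fin (n + 1)) α) (B : Matrix (Fin (n + 1)) o α) (e₁ : p → l) (e₃ : q → o)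
    (h : ∀ i, A (e₁ i) 0 = 0) :
    (A * B).submatrix e₁ e₃ = A.submatrix e₁ Fin.succ * B.submatrix Fin.succ e₃ := by
  ext i k
  simp [Matrix.mul_apply, Fin.sum_univ_succ, h]

structure IsHeisenbergBasis (b : Module.Basis (Fin 3) R L) : Prop where
  lie_two_one : ⁅b 2, b 1⁆ = b 0
  lie_two_zero : ⁅b 2, b 0⁆ = 0
  lie_one_zero : ⁅b 1, b 0⁆ = 0

namespace IsHeisenbergBasis

variable {b : Module.Basis (Fin 3) R L}

theorem lie_eq (hb : IsHeisenbergBasis b) (x y : L) :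
    ⁅x, y⁆ = (b.repr x 2 * b.repr y 1 - b.repr x 1 * b.repr y 2) • b 0 := by
  have h12 : ⁅b 1, b 2⁆ = -b 0 := by rw [← lie_skew, hb.lie_two_one]
  have h01 : ⁅b 0, b 1⁆ = 0 := by rw [← lie_skew, hb.lie_one_zero, neg_zero]
  have h02 : ⁅b 0, b 2⁆ = 0 := by rw [← lie_skew, hb.lie_two_zero, neg_zero]
  rw [← b.sum_repr x, ← b.sum_repr y]
  simp only [Fin.sum_univ_three, add_lie, lie_add, smul_lie, lie_smul, lie_self, hb.lie_two_one,
    hb.lie_two_zero, hb.lie_one_zero, h12, h01, h02, map_add, map_smul, b.repr_self]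
  simp only [smul_zero, add_zero, zero_add, smul_neg, Finsupp.smul_single, smul_eq_mul, mul_one,
    Finsupp.coe_add, Pi.add_apply, ne_eq, Fin.reduceEq, not_false_eq_true,
    Finsupp.single_eq_of_ne, Finsupp.single_eq_same]
  module

theorem apply_zero (hb : IsHeisenbergBasis b) (D : LieDerivation R L L) :
    D (b 0) = (b.repr (D (b 1)) 1 + b.repr (D (b 2)) 2) • b 0 := by
  conv_lhs => rw [← hb.lie_two_one, D.apply_lie_eq_sub, hb.lie_eq, hb.lie_eq]
  simp only [Module.Basis.repr_self, Finsupp.single_eq_same, one_mul, ne_eq, Fin.reduceEq,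
    not_false_eq_true, Finsupp.single_eq_of_ne, zero_mul, sub_zero, zero_sub, neg_smul,
    sub_neg_eq_add]
  module

section Block

attribute [local instance 100] LieRing.ofAssociativeRing

noncomputable def derivationBlock (hb : IsHeisenbergBasis b) :
    LieDerivation R L L →ₗ⁅R⁆ Matrix (Fin 2) (Fin 2) R where
  toFun D := (LinearMap.toMatrix b b D).submatrix Fin.succ Fin.succ
  map_add' D E := by simp [Matrix.submatrix_add]
  map_smul' c D := by simp [Matrix.submatrix_smul]
  map_lie' {D E} := by
    -- `D` preserves the centre, so the first column of its matrix vanishes below the diagonal.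
    have h (F : LieDerivation R L L) (i : Fin 2) : LinearMap.toMatrix b b F i.succ 0 = 0 := by
      simp [LinearMap.toMatrix_apply, hb.apply_zero, Fin.succ_ne_zero]
    simp only [LieDerivation.commutator_coe_linear_map, Ring.lie_def, map_sub,
      LinearMap.toMatrix_mul]
    rw [← Matrix.submatrix_mul_succ _ _ _ _ (h D), ← Matrix.submatrix_mul_succ _ _ _ _ (h E)]
    rfl

theorem derivationBlock_apply (hb : IsHeisenbergBasis b) (D : LieDerivation R L L) (i j : Fin 2) :
    hb.derivationBlock D i j = b.repr (D (b j.succ)) i.succ :=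
  LinearMap.toMatrix_apply _ _ _ _ _

theorem trace_eq (hb : IsHeisenbergBasis b) (D : LieDerivation R L L) :
    LinearMap.trace R L D.toLinearMap = 2 * (hb.derivationBlock D).trace := by
  rw [LinearMap.trace_eq_matrix_trace R b, Matrix.trace_fin_three, Matrix.trace_fin_two]
  simp [derivationBlock_apply, LinearMap.toMatrix_apply, hb.apply_zero]
  ring

theorem mem_traceless_iff [NoZeroDivisors R] [NeZero (2 : R)] (hb : IsHeisenbergBasis b)
    (D : LieDerivation R L L) :
    D ∈ LieDerivation.traceless R L ↔ (hb.derivationBlock D).trace = 0 := by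
  rw [LieDerivation.mem_traceless, hb.trace_eq, mul_eq_zero, or_iff_right two_ne_zero]

theorem derivationBlock_eq_zero_iff (hb : IsHeisenbergBasis b) (D : LieDerivation R L L) :
    hb.derivationBlock D = 0 ↔ ∃ y : L, ∀ x : L, D x = ⁅y, x⁆ := by
  constructor
  · intro hD
    have hD0 : D (b 0) = 0 := by
      have h00 := congrFun₂ hD 0 0
      have h11 := congrFun₂ hD 1 1
      simp only [derivationBlock_apply, Fin.succ_zero_eq_one, Fin.succ_one_eq_two,
        Matrix.zero_apply] at h00 h11
      rw [hb.apply_zero, h00, h11, add_zero, zero_smul]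
    have hDsucc (j : Fin 2) : D (b j.succ) = b.repr (D (b j.succ)) 0 • b 0 := by
      refine b.ext_elem fun i => ?_
      cases i using Fin.cases with
      | zero => simp
      | succ i => simpa [derivationBlock_apply] using congrFun₂ hD i j
    refine ⟨b.repr (D (b 1)) 0 • b 2 - b.repr (D (b 2)) 0 • b 1, fun x => ?_⟩
    refine LinearMap.congr_fun (b.ext (f₁ := D.toLinearMap) (f₂ := LieModule.toEnd R L L _)
      fun i => ?_) x
    fin_cases i
    · simp [hD0, hb.lie_eq]
    · simpa [hb.lie_eq] using hDsucc 0
    · simpa [hb.lie_eq] using hDsucc 1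
  · rintro ⟨y, hy⟩
    ext i j
    simp [derivationBlock_apply, hy, hb.lie_eq, Fin.succ_ne_zero]

theorem derivationBlock_surjective (hb : IsHeisenbergBasis b) :
    Function.Surjective hb.derivationBlock := by
  intro A
  let v : Fin 3 → L := ![A.trace • b 0, A 0 0 • b 1 + A 1 0 • b 2, A 0 1 • b 1 + A 1 1 • b 2]
  let f : L →ₗ[R] L := b.constr R v
  have hf : ∀ i, f (b i) = v i := b.constr_basis R v
  refine ⟨LieDerivation.ofBasis b f fun i j => ?_, ?_⟩
  · fin_cases i <;> fin_cases j <;> simp [hf, v, hb.lie_eq, Matrix.trace_fin_two] <;> module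
  · ext i j
    fin_cases i <;> fin_cases j <;> simp [hf, v, derivationBlock_apply]

noncomputable def tracelessBlock (hb : IsHeisenbergBasis b) :
    LieDerivation.traceless R L →ₗ⁅R⁆ Matrix (Fin 2) (Fin 2) R :=
  hb.derivationBlock.comp (LieDerivation.traceless R L).incl

theorem mem_ker_tracelessBlock (hb : IsHeisenbergBasis b) (D : LieDerivation.traceless R L) :
    D ∈ hb.tracelessBlock.ker ↔ ∃ y : L, ∀ x : L, (D : LieDerivation R L L) x = ⁅y, x⁆ :=
  LieHom.mem_ker.trans (hb.derivationBlock_eq_zero_iff D)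

theorem range_tracelessBlock [NoZeroDivisors R] [NeZero (2 : R)] (hb : IsHeisenbergBasis b) :
    hb.tracelessBlock.range = LieAlgebra.SpecialLinear.sl (Fin 2) R := by
  ext A
  rw [LieHom.mem_range]
  change _ ↔ A.trace = 0
  constructor
  · rintro ⟨⟨D, hD⟩, rfl⟩
    exact (hb.mem_traceless_iff D).1 hD
  · intro hA
    obtain ⟨D, rfl⟩ := hb.derivationBlock_surjective A
    exact ⟨⟨D, (hb.mem_traceless_iff D).2 hA⟩, rfl⟩

noncomputable def quotKerTracelessBlockEquiv [NoZeroDivisors R] [NeZero (2 : R)]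
    (hb : IsHeisenbergBasis b) :
    (LieDerivation.traceless R L ⧸ hb.tracelessBlock.ker) ≃ₗ⁅R⁆
      LieAlgebra.SpecialLinear.sl (Fin 2) R :=
  hb.tracelessBlock.quotKerEquivRange.trans
    (LieEquiv.ofEq _ _ (congrArg _ hb.range_tracelessBlock))

end Block

end IsHeisenbergBasis

/-- Let `𝔥₃` be the 3-dimensional Heisenberg Lie algebra (a real Lie
algebra with basis `x₁, x₂, x₃ = b 0, b 1, b 2` whose only nonzero bracket among basis
vectors is `⁅x₃, x₂⁆ = x₁`).  The set `sDer(𝔥₃)` of derivations with traceless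
underlying linear map is a Lie subalgebra of the Lie algebra `Der(𝔥₃)` of all
derivations; it contains the inner derivations `ad(𝔥₃)` as a Lie ideal; and the
quotient Lie algebra `sDer(𝔥₃)/ad(𝔥₃)` is isomorphic to `sl(2,ℝ)`. -/
theorem stmt7
    (L : Type) [LieRing L] [LieAlgebra ℝ L]
    (b : Module.Basis (Fin 3) ℝ L)
    (h21 : ⁅b 2, b 1⁆ = b 0) (h20 : ⁅b 2, b 0⁆ = 0) (h10 : ⁅b 1, b 0⁆ = 0) :
    ∃ S : LieSubalgebra ℝ (LieDerivation ℝ L L),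
      (∀ D : LieDerivation ℝ L L,
        D ∈ S ↔ LinearMap.trace ℝ L D.toLinearMap = 0) ∧
      ∃ I : LieIdeal ℝ S,
        (∀ D : S, D ∈ I ↔ ∃ y : L, ∀ x : L, (D : LieDerivation ℝ L L) x = ⁅y, x⁆) ∧
        Nonempty ((S ⧸ I) ≃ₗ⁅ℝ⁆ LieAlgebra.SpecialLinear.sl (Fin 2) ℝ) := by
  have hb : IsHeisenbergBasis b := ⟨h21, h20, h10⟩
  exact ⟨_, fun _ => LieDerivation.mem_traceless, _, hb.mem_ker_tracelessBlock,
    ⟨hb.quotKerTracelessBlockEquiv⟩⟩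
end

section
/- There is no 5-dimensional real unimodular solvable Lie algebra whose nilradical is isomorphic to the 3-dimensional Heisenberg Lie algebra 𝔥₃. -/
/-!
Extend a Heisenberg basis `x₁, x₂, x₃` of `N` (centre `x₁`) by `y₁, y₂` to a basis of `L`. Every
`ad x` preserves `N` and `ℝ x₁`; let `A x` be the matrix of `ad x` on `N / ℝ x₁`. Then `A` is a
Lie algebra homomorphism vanishing on `N`, `ad x` acts on `x₁` by `tr (A x)`, and
`tr (ad x) = 2 tr (A x) + tr (ad x on L / N)`. Writing `⁅y₁, y₂⁆ ≡ r y₁ + s y₂ mod N`,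
unimodularity gives `2 tr (A y₁) + s = 0 = 2 tr (A y₂) - r`, and a computation with `2 × 2`
matrices produces `y = t₁ y₁ + t₂ y₂ ∉ N` with `(r, s) ∈ ℝ (t₁, t₂)` and `A y` nilpotent. Then
`N + ℝ y` is an ideal, nilpotent by Engel's theorem, contradicting the maximality of `N`.
-/

open Module Submodule LieAlgebra Sum

lemma Submodule.exists_basis_sum_inl {K V ι : Type*} [Field K] [AddCommGroup V] [Module K V]
    [FiniteDimensional K V] [Fintype ι] {N : Submodule K V} (b : Basis ι K N) {n : ℕ}
    (hn : finrank K V = Fintype.card ι + n) :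
    ∃ e : Basis (ι ⊕ Fin n) K V, ∀ i, e (inl i) = b i := by
  obtain ⟨W, hW⟩ := N.exists_isCompl
  have hWn : finrank K W = n := by
    have := Submodule.finrank_add_eq_of_isCompl hW
    rw [finrank_eq_card_basis b] at this
    omega
  let c : Basis (Fin n) K W := (finBasis K W).reindex (finCongr hWn)
  refine ⟨(b.prod c).map (prodEquivOfIsCompl _ _ hW), fun i => ?_⟩
  simp [Basis.prod_apply]

section Nilpotent

variable {R L : Type*} [CommRing R] [LieRing L] [LieAlgebra R L]

lemma Submodule.exists_add_smul_of_mem_sup_span_singleton {M : Type*} [AddCommGroup M]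
    [Module R M] {N : Submodule R M} {y z : M} (hz : z ∈ N ⊔ R ∙ y) :
    ∃ n ∈ N, ∃ t : R, z = n + t • y := by
  obtain ⟨n, hn, w, hw, rfl⟩ := mem_sup.1 hz
  obtain ⟨t, rfl⟩ := mem_span_singleton.1 hw
  exact ⟨n, hn, t, rfl⟩

variable {N : LieIdeal R L} {Z : Submodule R L} {y z : L}

lemma LieIdeal.lie_mem_of_mem_sup_span_singleton {w : L} (hz : z ∈ N.toSubmodule ⊔ R ∙ y)
    (hw : w ∈ N.toSubmodule ⊔ R ∙ y) : ⁅z, w⁆ ∈ N := by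
  obtain ⟨n, hn, t, rfl⟩ := exists_add_smul_of_mem_sup_span_singleton hz
  obtain ⟨n', hn', t', rfl⟩ := exists_add_smul_of_mem_sup_span_singleton hw
  have hny : ⁅n, y⁆ ∈ N := by rw [← lie_skew]; exact neg_mem (N.lie_mem hn)
  simp only [add_lie, lie_add, smul_lie, lie_smul, lie_self, smul_zero, add_zero]
  exact add_mem (add_mem (N.lie_mem hn') (N.smul_mem _ (N.lie_mem hn'))) (N.smul_mem _ hny)

lemma LieIdeal.lie_eq_zero_of_mem_sup_span_singleton (hNZ : ∀ m ∈ N, ∀ c ∈ Z, ⁅m, c⁆ = 0)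
    (hyZ : ∀ c ∈ Z, ⁅y, c⁆ = 0) (hz : z ∈ N.toSubmodule ⊔ R ∙ y) {c : L} (hc : c ∈ Z) :
    ⁅z, c⁆ = 0 := by
  obtain ⟨n, hn, t, rfl⟩ := exists_add_smul_of_mem_sup_span_singleton hz
  rw [add_lie, smul_lie, hNZ n hn c hc, hyZ c hc, smul_zero, add_zero]

lemma LieIdeal.lie_lie_mem_of_mem_sup_span_singleton (hNN : ∀ m ∈ N, ∀ m' ∈ N, ⁅m, m'⁆ ∈ Z)
    (hNZ : ∀ m ∈ N, ∀ c ∈ Z, ⁅m, c⁆ = 0) (hyZ : ∀ c ∈ Z, ⁅y, c⁆ = 0)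
    (hyy : ∀ m ∈ N, ⁅y, ⁅y, m⁆⁆ ∈ Z) (hz : z ∈ N.toSubmodule ⊔ R ∙ y) {m : L} (hm : m ∈ N) :
    ⁅z, ⁅z, m⁆⁆ ∈ Z := by
  obtain ⟨n, hn, t, rfl⟩ := exists_add_smul_of_mem_sup_span_singleton hz
  have hnm : ⁅n, m⁆ ∈ Z := hNN n hn m hm
  have hym : ⁅y, m⁆ ∈ N := N.lie_mem hm
  rw [show ⁅n + t • y, m⁆ = ⁅n, m⁆ + t • ⁅y, m⁆ by rw [add_lie, smul_lie], lie_add, lie_smul,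
    lie_eq_zero_of_mem_sup_span_singleton hNZ hyZ hz hnm, zero_add, add_lie, smul_lie]
  exact Z.smul_mem _ (add_mem (hNN n hn _ hym) (Z.smul_mem _ (hyy m hm)))

theorem LieIdeal.isNilpotent_of_le_sup_span_singleton [IsNoetherian R L] {J : LieIdeal R L}
    (hJ : J.toSubmodule ≤ N.toSubmodule ⊔ R ∙ y) (hNN : ∀ m ∈ N, ∀ m' ∈ N, ⁅m, m'⁆ ∈ Z)
    (hNZ : ∀ m ∈ N, ∀ c ∈ Z, ⁅m, c⁆ = 0) (hyZ : ∀ c ∈ Z, ⁅y, c⁆ = 0)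
    (hyy : ∀ m ∈ N, ⁅y, ⁅y, m⁆⁆ ∈ Z) : LieRing.IsNilpotent J := by
  have : IsNoetherian R J := inferInstanceAs (IsNoetherian R J.toSubmodule)
  rw [LieAlgebra.isNilpotent_iff_forall (R := R)]
  rintro ⟨z, hz⟩
  refine ⟨4, LinearMap.ext fun ⟨w, hw⟩ => Subtype.ext ?_⟩
  have hz' := hJ hz
  have hzw : ⁅z, w⁆ ∈ N := lie_mem_of_mem_sup_span_singleton hz' (hJ hw)
  have h3 : ⁅z, ⁅z, ⁅z, w⁆⁆⁆ ∈ Z :=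
    lie_lie_mem_of_mem_sup_span_singleton hNN hNZ hyZ hyy hz' hzw
  exact lie_eq_zero_of_mem_sup_span_singleton hNZ hyZ hz' h3

def LieIdeal.supSpanSingleton (N : LieIdeal R L) (y : L)
    (hy : ∀ x : L, ⁅x, y⁆ ∈ N.toSubmodule ⊔ R ∙ y) : LieIdeal R L where
  toSubmodule := N.toSubmodule ⊔ R ∙ y
  lie_mem {x m} hm := by
    obtain ⟨n, hn, t, rfl⟩ := exists_add_smul_of_mem_sup_span_singleton hm
    rw [lie_add, lie_smul]
    exact add_mem (mem_sup_left (N.lie_mem hn)) (smul_mem _ _ (hy x))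

end Nilpotent

namespace Matrix

variable {K : Type*} [Field K]

theorem sq_eq_zero_of_trace_eq_zero_of_det_eq_zero {C : Matrix (Fin 2) (Fin 2) K}
    (htr : C.trace = 0) (hdet : C.det = 0) : C ^ 2 = 0 := by
  rw [trace_fin_two] at htr
  rw [det_fin_two] at hdet
  ext i j
  fin_cases i <;> fin_cases j <;> simp [sq, mul_apply, Fin.sum_univ_two]
  · linear_combination C 0 0 * htr - hdet
  · linear_combination C 0 1 * htr
  · linear_combination C 1 0 * htr
  · linear_combination C 1 1 * htr - hdet

theorem exists_trace_eq_zero_det_eq_zero_of_commutator_eq [CharZero K]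
    {A B : Matrix (Fin 2) (Fin 2) K} {r s : K} (hAB : A * B - B * A = r • A + s • B)
    (hA : 2 * A.trace + s = 0) (hB : 2 * B.trace = r) :
    ∃ t₁ t₂ k : K, (t₁ ≠ 0 ∨ t₂ ≠ 0) ∧ r = k * t₁ ∧ s = k * t₂ ∧
      (t₁ • A + t₂ • B).trace = 0 ∧ (t₁ • A + t₂ • B).det = 0 := by
  have h (i j : Fin 2) := congrFun₂ hAB i j
  simp only [sub_apply, add_apply, smul_apply, mul_apply, Fin.sum_univ_two, smul_eq_mul] at h
  have h₀₀ := h 0 0; have h₀₁ := h 0 1; have h₁₀ := h 1 0; have h₁₁ := h 1 1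
  simp only [trace_fin_two, det_fin_two, add_apply, smul_apply, smul_eq_mul]
  rw [trace_fin_two] at hA hB
  by_cases hrs : r = 0 ∧ s = 0
  · obtain ⟨rfl, rfl⟩ := hrs
    have hdA : A 1 1 = -A 0 0 := by linear_combination hA / 2
    have hdB : B 1 1 = -B 0 0 := by linear_combination hB / 2
    simp only [hdA, hdB, zero_mul, add_zero] at h₀₀ h₀₁ h₁₀ ⊢
    -- `B` commutes with the traceless `A`; unless `A` is nilpotent, `B` is a multiple of `A`
    -- and the combination below vanishes.
    by_cases hdet : A 0 0 ^ 2 + A 0 1 * A 1 0 = 0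
    · exact ⟨1, 0, 0, by simp, by ring, by ring, by ring, by linear_combination -hdet⟩
    refine ⟨-(A 0 0 * B 0 0 + A 0 1 * B 1 0), A 0 0 ^ 2 + A 0 1 * A 1 0, 0, Or.inr hdet,
      by ring, by ring, by ring, ?_⟩
    have key : (A 0 0 * B 0 0 + A 0 1 * B 1 0) ^ 2
        = (A 0 0 ^ 2 + A 0 1 * A 1 0) * (B 0 0 ^ 2 + B 0 1 * B 1 0) := by
      linear_combination (A 0 1 * B 1 0) * h₀₀ - (B 0 0 * A 1 0 / 2) * h₀₁
        - ((2 * B 0 0 * A 0 1 - A 0 0 * B 0 1) / 2) * h₁₀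
    linear_combination (A 0 0 ^ 2 + A 0 1 * A 1 0) * key
      - ((A 0 0 * B 0 0 + A 0 1 * B 1 0) * (A 0 0 ^ 2 + A 0 1 * A 1 0)) * h₀₀
  -- `C = r A + s B = ⁅A, B⁆` is traceless, and `⁅A, C⁆ = s C`, `⁅B, C⁆ = -r C` force `det C = 0`.
  · refine ⟨r, s, 1, not_and_or.1 hrs, by ring, by ring, ?_, ?_⟩
    · linear_combination -(h₀₀ + h₁₁)
    · linear_combination (r * A 0 0 + s * B 0 0 + (A 0 1 * B 1 0 - B 0 1 * A 1 0) / 2) * h₀₀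
        + (r * A 1 0 + s * B 1 0
            - (B 0 0 * A 1 0 + B 1 0 * A 1 1 - A 0 0 * B 1 0 - A 1 0 * B 1 1) / 2) * h₀₁
        + ((A 0 0 * B 0 1 + A 0 1 * B 1 1 - B 0 0 * A 0 1 - B 0 1 * A 1 1) / 2) * h₁₀
        - ((B 0 1 * A 1 0 - A 0 1 * B 1 0) / 2) * h₁₁
        - (r * A 0 0 + s * B 0 0) * (h₀₀ + h₁₁)

end Matrix

section HeisenbergFrame

variable {K L : Type*} [Field K] [LieRing L] [LieAlgebra K L]

/-- The vectors `e (inl 0), e (inl 1), e (inl 2)` are a Heisenberg basis `x₁, x₂, x₃` of `N`. -/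
structure IsHeisenbergFrame (N : LieIdeal K L) (e : Basis (Fin 3 ⊕ Fin 2) K L) : Prop where
  span_eq : span K (e '' Set.range inl) = N.toSubmodule
  lie_two_one : ⁅e (inl 2), e (inl 1)⁆ = e (inl 0)
  lie_two_zero : ⁅e (inl 2), e (inl 0)⁆ = 0
  lie_one_zero : ⁅e (inl 1), e (inl 0)⁆ = 0

/-- For a Heisenberg frame, the matrix of `ad x` on `N / K x₁` in the basis `x₂, x₃`. -/
noncomputable def heisenbergBlock (e : Basis (Fin 3 ⊕ Fin 2) K L) :
    L →ₗ[K] Matrix (Fin 2) (Fin 2) K where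
  toFun x := (LinearMap.toMatrix e e (ad K L x)).submatrix (inl ·.succ) (inl ·.succ)
  map_add' x y := by simp [Matrix.submatrix_add]
  map_smul' c x := by simp [Matrix.submatrix_smul]

lemma heisenbergBlock_apply (e : Basis (Fin 3 ⊕ Fin 2) K L) (x : L) (i j : Fin 2) :
    heisenbergBlock e x i j = LinearMap.toMatrix e e (ad K L x) (inl i.succ) (inl j.succ) := rfl

namespace IsHeisenbergFrame

variable {N : LieIdeal K L} {e : Basis (Fin 3 ⊕ Fin 2) K L}

lemma of_basis (b : Basis (Fin 3) K N) (h21 : ⁅b 2, b 1⁆ = b 0) (h20 : ⁅b 2, b 0⁆ = 0)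
    (h10 : ⁅b 1, b 0⁆ = 0) (he : ∀ i, e (inl i) = b i) : IsHeisenbergFrame N e where
  span_eq := by
    rw [← Set.range_comp, show e ∘ inl = N.toSubmodule.subtype ∘ b from funext he,
      Set.range_comp, ← map_span, b.span_eq, map_subtype_top]
  lie_two_one := by rw [he, he, he, ← h21]; rfl
  lie_two_zero := by rw [he, he]; exact congrArg ((↑) : N → L) h20
  lie_one_zero := by rw [he, he]; exact congrArg ((↑) : N → L) h10

lemma mem_iff (h : IsHeisenbergFrame N e) {m : L} : m ∈ N ↔ ∀ j, e.repr m (inr j) = 0 := by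
  rw [← LieSubmodule.mem_toSubmodule, ← h.span_eq, Basis.mem_span_image]
  constructor
  · intro hm j
    by_contra hj
    obtain ⟨i, hi⟩ := hm (Finsupp.mem_support_iff.2 hj)
    exact inl_ne_inr hi
  · rintro hm (i | j) hk
    · exact ⟨i, rfl⟩
    · exact absurd (hm j) (Finsupp.mem_support_iff.1 hk)

lemma mem (h : IsHeisenbergFrame N e) (i : Fin 3) : e (inl i) ∈ N := by
  rw [← LieSubmodule.mem_toSubmodule, ← h.span_eq]
  exact subset_span ⟨inl i, ⟨i, rfl⟩, rfl⟩

lemma sum_repr (h : IsHeisenbergFrame N e) {m : L} (hm : m ∈ N) :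
    ∑ i, e.repr m (inl i) • e (inl i) = m := by
  conv_rhs => rw [← e.sum_repr m, Fintype.sum_sum_type]
  simp [h.mem_iff.1 hm]

lemma exists_mem_eq_add (h : IsHeisenbergFrame N e) (v : L) :
    ∃ n ∈ N, v = n + (e.repr v (inr 0) • e (inr 0) + e.repr v (inr 1) • e (inr 1)) := by
  refine ⟨∑ i, e.repr v (inl i) • e (inl i), sum_mem fun i _ => N.smul_mem _ (h.mem i), ?_⟩
  conv_lhs => rw [← e.sum_repr v]
  rw [Fintype.sum_sum_type, Fin.sum_univ_two]

lemma apply_inl (h : IsHeisenbergFrame N e) {f : Module.End K L} (hf : ∀ m ∈ N, f m ∈ N)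
    (j : Fin 3) : f (e (inl j)) = ∑ i, LinearMap.toMatrix e e f (inl i) (inl j) • e (inl i) := by
  simp only [LinearMap.toMatrix_apply]
  exact (h.sum_repr (hf _ (h.mem j))).symm

lemma lie_zero_one (h : IsHeisenbergFrame N e) : ⁅e (inl 0), e (inl 1)⁆ = 0 := by
  rw [← lie_skew, h.lie_one_zero, neg_zero]

lemma lie_zero_two (h : IsHeisenbergFrame N e) : ⁅e (inl 0), e (inl 2)⁆ = 0 := by
  rw [← lie_skew, h.lie_two_zero, neg_zero]

lemma lie_one_two (h : IsHeisenbergFrame N e) : ⁅e (inl 1), e (inl 2)⁆ = -e (inl 0) := by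
  rw [← lie_skew, h.lie_two_one]

lemma lie_eq_zero_of_mem_span (h : IsHeisenbergFrame N e) {m c : L} (hm : m ∈ N)
    (hc : c ∈ K ∙ e (inl 0)) : ⁅m, c⁆ = 0 := by
  obtain ⟨t, rfl⟩ := mem_span_singleton.1 hc
  rw [← h.sum_repr hm]
  simp [Fin.sum_univ_three, h.lie_one_zero, h.lie_two_zero]

lemma lie_mem_span_of_mem (h : IsHeisenbergFrame N e) {m m' : L} (hm : m ∈ N) (hm' : m' ∈ N) :
    ⁅m, m'⁆ ∈ K ∙ e (inl 0) := by
  rw [← h.sum_repr hm, ← h.sum_repr hm']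
  simp only [Fin.sum_univ_three, add_lie, lie_add, smul_lie, lie_smul, lie_self, h.lie_two_one,
    h.lie_one_two, h.lie_zero_one, h.lie_zero_two, h.lie_one_zero, h.lie_two_zero]
  apply_rules [add_mem, neg_mem, smul_mem, zero_mem, mem_span_singleton_self]

lemma lie_inl_zero (h : IsHeisenbergFrame N e) (x : L) :
    ⁅x, e (inl 0)⁆ = (heisenbergBlock e x).trace • e (inl 0) := by
  have hN : ∀ m ∈ N, ad K L x m ∈ N := fun m hm => N.lie_mem hm
  have h1 := h.apply_inl hN 1
  have h2 := h.apply_inl hN 2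
  simp only [ad_apply, Fin.sum_univ_three] at h1 h2
  rw [← h.lie_two_one, leibniz_lie, h1, h2]
  simp only [add_lie, lie_add, smul_lie, lie_smul, lie_self, h.lie_two_one, h.lie_zero_one,
    h.lie_two_zero, Matrix.trace_fin_two, heisenbergBlock_apply, Fin.succ_zero_eq_one,
    Fin.succ_one_eq_two]
  module

lemma toMatrix_ad_inr_inl (h : IsHeisenbergFrame N e) (x : L) (j : Fin 2) (i : Fin 3) :
    LinearMap.toMatrix e e (ad K L x) (inr j) (inl i) = 0 := by
  rw [LinearMap.toMatrix_apply]
  exact h.mem_iff.1 (N.lie_mem (h.mem i)) j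

lemma toMatrix_ad_inl_inl_zero (h : IsHeisenbergFrame N e) (x : L) (i : Fin 3) :
    LinearMap.toMatrix e e (ad K L x) (inl i) (inl 0) =
      if i = 0 then (heisenbergBlock e x).trace else 0 := by
  rw [LinearMap.toMatrix_apply, ad_apply, h.lie_inl_zero, map_smul, e.repr_self]
  simp [Finsupp.single_apply, eq_comm]

lemma toMatrix_mul_inl_succ (h : IsHeisenbergFrame N e) (x y : L) (a b : Fin 2) :
    (LinearMap.toMatrix e e (ad K L x) * LinearMap.toMatrix e e (ad K L y))
      (inl a.succ) (inl b.succ) = (heisenbergBlock e x * heisenbergBlock e y) a b := by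
  simp [Matrix.mul_apply, Fintype.sum_sum_type, Fin.sum_univ_succ (n := 2), h.toMatrix_ad_inr_inl,
    h.toMatrix_ad_inl_inl_zero, heisenbergBlock_apply]

lemma heisenbergBlock_lie (h : IsHeisenbergFrame N e) (x y : L) :
    heisenbergBlock e ⁅x, y⁆ = heisenbergBlock e x * heisenbergBlock e y -
      heisenbergBlock e y * heisenbergBlock e x := by
  have had : ad K L ⁅x, y⁆ = ad K L x * ad K L y - ad K L y * ad K L x :=
    LinearMap.ext fun z => lie_lie x y z
  ext a b
  rw [heisenbergBlock_apply, had, map_sub, LinearMap.toMatrix_mul,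
    LinearMap.toMatrix_mul, Matrix.sub_apply, Matrix.sub_apply, h.toMatrix_mul_inl_succ,
    h.toMatrix_mul_inl_succ]

lemma heisenbergBlock_eq_zero_of_mem (h : IsHeisenbergFrame N e) {n : L} (hn : n ∈ N) :
    heisenbergBlock e n = 0 := by
  ext a b
  obtain ⟨c, hc⟩ := mem_span_singleton.1 (h.lie_mem_span_of_mem hn (h.mem b.succ))
  rw [heisenbergBlock_apply, LinearMap.toMatrix_apply, ad_apply, ← hc, map_smul, e.repr_self]
  simp [Fin.succ_ne_zero]

lemma trace_ad (h : IsHeisenbergFrame N e) (x : L) :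
    LinearMap.trace K L (ad K L x) = 2 * (heisenbergBlock e x).trace +
      (LinearMap.toMatrix e e (ad K L x) (inr 0) (inr 0) +
        LinearMap.toMatrix e e (ad K L x) (inr 1) (inr 1)) := by
  rw [LinearMap.trace_eq_matrix_trace K e, Matrix.trace, Fintype.sum_sum_type, Fin.sum_univ_three,
    Fin.sum_univ_two, Matrix.diag, h.toMatrix_ad_inl_inl_zero, if_pos rfl, Matrix.trace_fin_two]
  simp only [heisenbergBlock_apply, Fin.succ_zero_eq_one, Fin.succ_one_eq_two, Matrix.diag]
  ring

lemma lie_lie_mem_span (h : IsHeisenbergFrame N e) {y : L}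
    (htr : (heisenbergBlock e y).trace = 0) (hsq : heisenbergBlock e y ^ 2 = 0) {m : L}
    (hm : m ∈ N) : ⁅y, ⁅y, m⁆⁆ ∈ K ∙ e (inl 0) := by
  rw [← h.sum_repr hm]
  simp only [lie_sum, lie_smul]
  refine sum_mem fun j _ => smul_mem _ _ ?_
  cases j using Fin.cases with
  | zero => rw [h.lie_inl_zero, htr, zero_smul, lie_zero]; exact zero_mem _
  | succ b =>
    have hN : ∀ m ∈ N, (ad K L y * ad K L y) m ∈ N := fun m hm => N.lie_mem (N.lie_mem hm)
    have := h.apply_inl hN b.succ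
    rw [Module.End.mul_apply, ad_apply, ad_apply] at this
    rw [this, Fin.sum_univ_succ, LinearMap.toMatrix_mul]
    simp only [h.toMatrix_mul_inl_succ, ← sq, hsq, Matrix.zero_apply, zero_smul,
      Finset.sum_const_zero, add_zero]
    exact smul_mem _ _ (mem_span_singleton_self _)

lemma exists_heisenbergBlock_trace_det_eq_zero [CharZero K] (h : IsHeisenbergFrame N e)
    (huni : ∀ x : L, LinearMap.trace K L (ad K L x) = 0) :
    ∃ t₁ t₂ k : K, (t₁ ≠ 0 ∨ t₂ ≠ 0) ∧
      ⁅e (inr 0), e (inr 1)⁆ - k • (t₁ • e (inr 0) + t₂ • e (inr 1)) ∈ N ∧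
      (heisenbergBlock e (t₁ • e (inr 0) + t₂ • e (inr 1))).trace = 0 ∧
      (heisenbergBlock e (t₁ • e (inr 0) + t₂ • e (inr 1))).det = 0 := by
  obtain ⟨n, hn, hy⟩ := h.exists_mem_eq_add ⁅e (inr 0), e (inr 1)⁆
  set r := e.repr ⁅e (inr 0), e (inr 1)⁆ (inr 0)
  set s := e.repr ⁅e (inr 0), e (inr 1)⁆ (inr 1)
  have hcomm : heisenbergBlock e (e (inr 0)) * heisenbergBlock e (e (inr 1)) -
      heisenbergBlock e (e (inr 1)) * heisenbergBlock e (e (inr 0)) =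
      r • heisenbergBlock e (e (inr 0)) + s • heisenbergBlock e (e (inr 1)) := by
    rw [← h.heisenbergBlock_lie, hy, map_add, h.heisenbergBlock_eq_zero_of_mem hn, zero_add,
      map_add, map_smul, map_smul]
  have htr₁ : 2 * (heisenbergBlock e (e (inr 0))).trace + s = 0 := by
    have := h.trace_ad (e (inr 0))
    simp only [huni, LinearMap.toMatrix_apply, ad_apply, lie_self, map_zero,
      Finsupp.coe_zero, Pi.zero_apply, zero_add] at this
    exact this.symm
  have htr₂ : 2 * (heisenbergBlock e (e (inr 1))).trace = r := by
    have := h.trace_ad (e (inr 1))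
    simp only [huni, LinearMap.toMatrix_apply, ad_apply, lie_self,
      ← lie_skew (e (inr 1)) (e (inr 0)), map_neg, map_zero, Finsupp.coe_neg, Finsupp.coe_zero,
      Pi.neg_apply, Pi.zero_apply, add_zero] at this
    linear_combination -this
  obtain ⟨t₁, t₂, k, ht, hr, hs, htr, hdet⟩ :=
    Matrix.exists_trace_eq_zero_det_eq_zero_of_commutator_eq hcomm htr₁ htr₂
  refine ⟨t₁, t₂, k, ht, ?_, by simpa using htr, by simpa using hdet⟩
  rw [hy, hr, hs]
  convert hn using 1
  module

lemma exists_notMem_lie_mem_sup_span_singleton [CharZero K] (h : IsHeisenbergFrame N e)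
    (huni : ∀ x : L, LinearMap.trace K L (ad K L x) = 0) :
    ∃ y ∉ N, (∀ x : L, ⁅x, y⁆ ∈ N.toSubmodule ⊔ K ∙ y) ∧ (∀ c ∈ K ∙ e (inl 0), ⁅y, c⁆ = 0) ∧
      ∀ m ∈ N, ⁅y, ⁅y, m⁆⁆ ∈ K ∙ e (inl 0) := by
  obtain ⟨t₁, t₂, k, ht, hk, htr, hdet⟩ := h.exists_heisenbergBlock_trace_det_eq_zero huni
  set y := t₁ • e (inr 0) + t₂ • e (inr 1)
  refine ⟨y, fun hy => ?_, fun x => ?_, fun c hc => ?_,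
    fun m => h.lie_lie_mem_span htr (Matrix.sq_eq_zero_of_trace_eq_zero_of_det_eq_zero htr hdet)⟩
  · have hy₀ := h.mem_iff.1 hy 0
    have hy₁ := h.mem_iff.1 hy 1
    simp [y] at hy₀ hy₁
    exact ht.elim (· hy₀) (· hy₁)
  · set J := N.toSubmodule ⊔ K ∙ y
    have hyJ : y ∈ J := mem_sup_right (mem_span_singleton_self y)
    have hcomm : ⁅e (inr 0), e (inr 1)⁆ ∈ J := by
      rw [← sub_add_cancel ⁅e (inr 0), e (inr 1)⁆ (k • y)]
      exact add_mem (mem_sup_left hk) (smul_mem _ _ hyJ)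
    have hbasis : ∀ i, ⁅e i, y⁆ ∈ J := by
      rintro (i | j)
      · rw [← lie_skew]
        exact mem_sup_left (neg_mem (N.lie_mem (h.mem i)))
      · fin_cases j
        · show ⁅e (inr 0), y⁆ ∈ J
          have : ⁅e (inr 0), y⁆ = t₂ • ⁅e (inr 0), e (inr 1)⁆ := by simp [y]
          rw [this]
          exact smul_mem _ _ hcomm
        · show ⁅e (inr 1), y⁆ ∈ J
          have : ⁅e (inr 1), y⁆ = (-t₁) • ⁅e (inr 0), e (inr 1)⁆ := by
            rw [lie_add, lie_smul, lie_smul, lie_self, ← lie_skew (e (inr 1)) (e (inr 0))]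
            module
          rw [this]
          exact smul_mem _ _ hcomm
    rw [← e.sum_repr x, sum_lie]
    exact sum_mem fun i _ => by rw [smul_lie]; exact smul_mem _ _ (hbasis i)
  · obtain ⟨t, rfl⟩ := mem_span_singleton.1 hc
    rw [lie_smul, h.lie_inl_zero, htr, zero_smul, smul_zero]

end IsHeisenbergFrame

end HeisenbergFrame

theorem stmt8_general
    (L : Type) [LieRing L] [LieAlgebra ℝ L] [FiniteDimensional ℝ L]
    (hdim : finrank ℝ L = 5)
    (huni : ∀ x : L, LinearMap.trace ℝ L (LieAlgebra.ad ℝ L x) = 0)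
    (N : LieIdeal ℝ L)
    (hNmax : ∀ I : LieIdeal ℝ L, LieRing.IsNilpotent I → I ≤ N) :
    ¬ ∃ b : Basis (Fin 3) ℝ N,
        ⁅b 2, b 1⁆ = b 0 ∧ ⁅b 2, b 0⁆ = 0 ∧ ⁅b 1, b 0⁆ = 0 := by
  rintro ⟨b, h21, h20, h10⟩
  obtain ⟨e, he⟩ :=
    Submodule.exists_basis_sum_inl (N := N.toSubmodule) (n := 2) b (by simp [hdim])
  have h := IsHeisenbergFrame.of_basis b h21 h20 h10 he
  obtain ⟨y, hyN, hyL, hyZ, hyy⟩ := h.exists_notMem_lie_mem_sup_span_singleton huni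
  have hJ : LieRing.IsNilpotent (N.supSpanSingleton y hyL) :=
    LieIdeal.isNilpotent_of_le_sup_span_singleton le_rfl
      (fun _ hm _ hm' => h.lie_mem_span_of_mem hm hm')
      (fun _ hm _ hc => h.lie_eq_zero_of_mem_span hm hc) hyZ hyy
  exact hyN (hNmax _ hJ (mem_sup_right (mem_span_singleton_self y)))

/-- There is no 5-dimensional real unimodular solvable Lie algebra
whose nilradical is isomorphic to the 3-dimensional Heisenberg Lie algebra `𝔥₃`.
(Here the nilradical `N` is characterised as a nilpotent Lie ideal containing every
nilpotent Lie ideal, and being isomorphic to `𝔥₃` is expressed by the existence of a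
basis `x₁, x₂, x₃ = b 0, b 1, b 2` of `N` whose only nonzero bracket among basis
vectors is `⁅x₃, x₂⁆ = x₁`.) -/
theorem stmt8
    (L : Type) [LieRing L] [LieAlgebra ℝ L] [FiniteDimensional ℝ L]
    [LieAlgebra.IsSolvable L]
    (hdim : finrank ℝ L = 5)
    (huni : ∀ x : L, LinearMap.trace ℝ L (LieAlgebra.ad ℝ L x) = 0)
    (N : LieIdeal ℝ L)
    (hNnil : LieRing.IsNilpotent N)
    (hNmax : ∀ I : LieIdeal ℝ L, LieRing.IsNilpotent I → I ≤ N) :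
    ¬ ∃ b : Basis (Fin 3) ℝ N,
        ⁅b 2, b 1⁆ = b 0 ∧ ⁅b 2, b 0⁆ = 0 ∧ ⁅b 1, b 0⁆ = 0 :=
  stmt8_general L hdim huni N hNmax
end

section
/- There exist matrices A, B ∈ SL(3,ℤ) such that: (1) A and B commute; (2) there exists P ∈ GL(3,ℝ) such that P·A·P⁻¹ and P·B·P⁻¹ are both diagonal matrices with positive diagonal entries; and (3) the subgroup generated by A and B is free abelian of rank 2, i.e. for all integers m, n, if Aᵐ·Bⁿ = 1 then m = n = 0. (Consequently the Lie group ℝ³ ⋊ ℝ², where ℝ² acts on ℝ³ as the diagonal matrices with positive entries and determinant 1, admits a lattice isomorphic to ℤ³ ⋊ ℤ².) -/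
open Matrix

namespace Stmt12Aux

/-- scalar lemma: both bases in (0,1). -/
lemma scalar_both {c d : ℝ} (hc0 : 0 < c) (hc1 : c < 1) (hd0 : 0 < d) (hd1 : d < 1)
    {p q : ℕ} (h : c ^ p * d ^ q = 1) : p = 0 ∧ q = 0 := by
  constructor
  · by_contra hp
    have h1 : c ^ p < 1 := pow_lt_one₀ hc0.le hc1 hp
    have h2 : d ^ q ≤ 1 := pow_le_one₀ hd0.le hd1.le
    nlinarith [pow_pos hc0 p, pow_pos hd0 q]
  · by_contra hq
    have h1 : d ^ q < 1 := pow_lt_one₀ hd0.le hd1 hq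
    have h2 : c ^ p ≤ 1 := pow_le_one₀ hc0.le hc1.le
    nlinarith [pow_pos hc0 p, pow_pos hd0 q]

/-- scalar lemma: one base > 1, one base in (0,1). -/
lemma scalar_mixed {c d : ℝ} (hc : 1 < c) (hd0 : 0 < d) (hd1 : d < 1)
    {p q : ℕ} (h : c ^ p = d ^ q) : p = 0 ∧ q = 0 := by
  have h1 : 1 ≤ c ^ p := one_le_pow₀ hc.le
  have h2 : d ^ q ≤ 1 := pow_le_one₀ hd0.le hd1.le
  constructor
  · by_contra hp
    have := one_lt_pow₀ hc hp
    nlinarith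
  · by_contra hq
    have := pow_lt_one₀ hd0.le hd1 hq
    nlinarith

lemma conj_pow {n : ℕ} {M V D : Matrix (Fin 3) (Fin 3) ℝ} (h : M * V = V * D) :
    M ^ n * V = V * D ^ n := by
  induction n with
  | zero => simp
  | succ k ih =>
    calc M ^ (k+1) * V = M ^ k * (M * V) := by rw [pow_succ, mul_assoc]
      _ = M ^ k * V * D := by rw [h, mul_assoc]
      _ = V * (D ^ k * D) := by rw [ih, mul_assoc]
      _ = V * D ^ (k+1) := by rw [← pow_succ]

end Stmt12Aux

set_option maxHeartbeats 4000000 in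
open Stmt12Aux in
/-- There exist matrices `A, B ∈ SL(3,ℤ)` such that (1) `A` and `B`
commute; (2) there exists `P ∈ GL(3,ℝ)` conjugating both `A` and `B` (viewed as real
matrices) to diagonal matrices with positive diagonal entries; and (3) the subgroup
generated by `A` and `B` is free abelian of rank 2: `Aᵐ·Bⁿ = 1` implies `m = n = 0`. -/
theorem stmt12 :
    ∃ A B : Matrix.SpecialLinearGroup (Fin 3) ℤ,
      A * B = B * A ∧
      (∃ P : GL (Fin 3) ℝ, ∃ dA dB : Fin 3 → ℝ,
        (∀ i, 0 < dA i) ∧ (∀ i, 0 < dB i) ∧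
        (P : Matrix (Fin 3) (Fin 3) ℝ) * ((A : Matrix (Fin 3) (Fin 3) ℤ).map (Int.cast : ℤ → ℝ)) *
          ((P⁻¹ : GL (Fin 3) ℝ) : Matrix (Fin 3) (Fin 3) ℝ) = Matrix.diagonal dA ∧
        (P : Matrix (Fin 3) (Fin 3) ℝ) * ((B : Matrix (Fin 3) (Fin 3) ℤ).map (Int.cast : ℤ → ℝ)) *
          ((P⁻¹ : GL (Fin 3) ℝ) : Matrix (Fin 3) (Fin 3) ℝ) = Matrix.diagonal dB) ∧
      (∀ m n : ℤ, A ^ m * B ^ n = 1 → m = 0 ∧ n = 0) := by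
  classical
  -- the companion matrix C of x^3 - x^2 - 2x + 1, with A = C^2, B = (C-1)^2
  have hACC : (!![0,0,1; -1,2,1; -1,1,3] : Matrix (Fin 3) (Fin 3) ℤ)
      = !![0,1,0; 0,0,1; -1,2,1] * !![0,1,0; 0,0,1; -1,2,1] := by decide
  have hBCC : (!![1,-2,1; -1,3,-1; 1,-3,2] : Matrix (Fin 3) (Fin 3) ℤ)
      = (!![0,1,0; 0,0,1; -1,2,1] - 1) * (!![0,1,0; 0,0,1; -1,2,1] - 1) := by decide
  have hdetA : (!![0,0,1; -1,2,1; -1,1,3] : Matrix (Fin 3) (Fin 3) ℤ).det = 1 := by decide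
  have hdetB : (!![1,-2,1; -1,3,-1; 1,-3,2] : Matrix (Fin 3) (Fin 3) ℤ).det = 1 := by decide
  set Cz : Matrix (Fin 3) (Fin 3) ℤ := !![0,1,0; 0,0,1; -1,2,1] with hCzd
  set Az : Matrix (Fin 3) (Fin 3) ℤ := !![0,0,1; -1,2,1; -1,1,3] with hAzd
  set Bz : Matrix (Fin 3) (Fin 3) ℤ := !![1,-2,1; -1,3,-1; 1,-3,2] with hBzd
  have hcommz : Az * Bz = Bz * Az := by rw [hAzd, hBzd]; decide
  refine ⟨⟨Az, hdetA⟩, ⟨Bz, hdetB⟩, Subtype.ext (by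
    exact hcommz), ?_, ?_⟩
  all_goals {
    -- get the three real roots of x^3 - x^2 - 2x + 1 by the intermediate value theorem
    have hg : Continuous fun x : ℝ => x^3 - x^2 - 2*x + 1 := by fun_prop
    obtain ⟨t0, ht0m, ht0⟩ : ∃ u : ℝ, u ∈ Set.Icc (1.8:ℝ) 1.9 ∧ u^3 - u^2 - 2*u + 1 = 0 := by
      obtain ⟨u, hum, hu⟩ := intermediate_value_Icc (by norm_num : (1.8:ℝ) ≤ 1.9)
        hg.continuousOn (show (0:ℝ) ∈ Set.Icc ((1.8:ℝ)^3 - (1.8:ℝ)^2 - 2*(1.8:ℝ) + 1)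
          ((1.9:ℝ)^3 - (1.9:ℝ)^2 - 2*(1.9:ℝ) + 1) by constructor <;> norm_num)
      exact ⟨u, hum, hu⟩
    obtain ⟨t1, ht1m, ht1⟩ : ∃ u : ℝ, u ∈ Set.Icc (0.4:ℝ) 0.5 ∧ u^3 - u^2 - 2*u + 1 = 0 := by
      obtain ⟨u, hum, hu⟩ := intermediate_value_Icc' (by norm_num : (0.4:ℝ) ≤ 0.5)
        hg.continuousOn (show (0:ℝ) ∈ Set.Icc ((0.5:ℝ)^3 - (0.5:ℝ)^2 - 2*(0.5:ℝ) + 1)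
          ((0.4:ℝ)^3 - (0.4:ℝ)^2 - 2*(0.4:ℝ) + 1) by constructor <;> norm_num)
      exact ⟨u, hum, hu⟩
    obtain ⟨t2, ht2m, ht2⟩ : ∃ u : ℝ, u ∈ Set.Icc (-1.3:ℝ) (-1.2) ∧ u^3 - u^2 - 2*u + 1 = 0 := by
      obtain ⟨u, hum, hu⟩ := intermediate_value_Icc (by norm_num : (-1.3:ℝ) ≤ -1.2)
        hg.continuousOn (show (0:ℝ) ∈ Set.Icc ((-1.3:ℝ)^3 - (-1.3:ℝ)^2 - 2*(-1.3:ℝ) + 1)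
          ((-1.2:ℝ)^3 - (-1.2:ℝ)^2 - 2*(-1.2:ℝ) + 1) by constructor <;> norm_num)
      exact ⟨u, hum, hu⟩
    obtain ⟨h0l, h0r⟩ := ht0m; obtain ⟨h1l, h1r⟩ := ht1m; obtain ⟨h2l, h2r⟩ := ht2m
    set t : Fin 3 → ℝ := ![t0, t1, t2] with htdef
    have htv0 : t 0 = t0 := rfl
    have htv1 : t 1 = t1 := rfl
    have htv2 : t 2 = t2 := rfl
    have hroot : ∀ i, t i ^ 3 - t i ^ 2 - 2 * t i + 1 = 0 := by
      intro i
      fin_cases i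
      · exact ht0
      · exact ht1
      · exact ht2
    -- the Vandermonde eigenvector matrix
    set V : Matrix (Fin 3) (Fin 3) ℝ := Matrix.of (fun i j : Fin 3 => t j ^ (i : ℕ)) with hVdef
    have htinj : Function.Injective t := by
      intro i j hij
      have h3 : ∀ k : Fin 3, k = 0 ∨ k = 1 ∨ k = 2 := by decide
      rcases h3 i with rfl | rfl | rfl <;> rcases h3 j with rfl | rfl | rfl <;>
        first
          | rfl
          | (exfalso
             simp only [htv0, htv1, htv2] at hij
             linarith)
    have hVdet : V.det ≠ 0 := by
      have : V = (Matrix.vandermonde t)ᵀ := by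
        ext i j; simp [hVdef, Matrix.vandermonde, Matrix.transpose_apply]
      rw [this, Matrix.det_transpose]
      exact Matrix.det_vandermonde_ne_zero_iff.mpr htinj
    have hVunit : IsUnit V.det := isUnit_iff_ne_zero.mpr hVdet
    have hVinvV : V⁻¹ * V = 1 := Matrix.nonsing_inv_mul V hVunit
    have hVVinv : V * V⁻¹ = 1 := Matrix.mul_nonsing_inv V hVunit
    -- real versions of the matrices
    set φ : Matrix (Fin 3) (Fin 3) ℤ →+* Matrix (Fin 3) (Fin 3) ℝ :=
      (Int.castRingHom ℝ).mapMatrix with hφ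
    have hφap : ∀ M : Matrix (Fin 3) (Fin 3) ℤ, φ M = M.map (Int.cast : ℤ → ℝ) := by
      intro M; rw [hφ, RingHom.mapMatrix_apply, Int.coe_castRingHom]
    set Cr : Matrix (Fin 3) (Fin 3) ℝ := Cz.map (Int.cast : ℤ → ℝ) with hCr
    set Ar : Matrix (Fin 3) (Fin 3) ℝ := Az.map (Int.cast : ℤ → ℝ) with hAr
    set Br : Matrix (Fin 3) (Fin 3) ℝ := Bz.map (Int.cast : ℤ → ℝ) with hBr
    have hArCC : Ar = Cr * Cr := by
      rw [hAr, hCr, ← hφap, ← hφap, ← _root_.map_mul, hAzd, hCzd, ← hACC]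
    have hBrCC : Br = (Cr - 1) * (Cr - 1) := by
      rw [hBr, hCr, ← hφap, ← hφap, ← _root_.map_one φ, ← _root_.map_sub, ← _root_.map_mul, hBzd, hCzd, ← hBCC]
    have hCV : Cr * V = V * Matrix.diagonal t := by
      ext i j
      rw [Matrix.mul_diagonal, Matrix.mul_apply, Fin.sum_univ_three]
      have hr := hroot j
      fin_cases i <;>
        simp [hCr, hCzd, hVdef, Matrix.map_apply, Matrix.vecHead, Matrix.vecTail] <;>
        ring_nf <;> linarith [hr]
    have hCV1 : (Cr - 1) * V = V * Matrix.diagonal (fun i => t i - 1) := by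
      have hone : Matrix.diagonal (fun i : Fin 3 => t i - 1)
          = Matrix.diagonal t - (1 : Matrix (Fin 3) (Fin 3) ℝ) := by
        rw [← Matrix.diagonal_one, ← Matrix.diagonal_sub]
      rw [hone, Matrix.sub_mul, Matrix.mul_sub, hCV, one_mul, mul_one]
    have hAV : Ar * V = V * Matrix.diagonal (fun i => t i ^ 2) := by
      rw [hArCC, mul_assoc, hCV, ← mul_assoc, hCV, mul_assoc, Matrix.diagonal_mul_diagonal]
      have he : (fun i => t i * t i) = fun i => t i ^ 2 := by funext i; ring
      rw [he]
    have hBV : Br * V = V * Matrix.diagonal (fun i => (t i - 1) ^ 2) := by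
      rw [hBrCC, mul_assoc, hCV1, ← mul_assoc, hCV1, mul_assoc, Matrix.diagonal_mul_diagonal]
      have he : (fun i => (t i - 1) * (t i - 1)) = fun i => (t i - 1) ^ 2 := by funext i; ring
      rw [he]
    -- the key scalar consequence of a relation among A and B
    set A0 : Matrix.SpecialLinearGroup (Fin 3) ℤ := ⟨Az, hdetA⟩ with hA0
    set B0 : Matrix.SpecialLinearGroup (Fin 3) ℤ := ⟨Bz, hdetB⟩ with hB0
    have key : ∀ p q r s : ℕ,
        A0 ^ p * B0 ^ q = A0 ^ r * B0 ^ s →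
        ∀ i, (t i ^ 2) ^ p * ((t i - 1) ^ 2) ^ q = (t i ^ 2) ^ r * ((t i - 1) ^ 2) ^ s := by
      intro p q r s h i
      have hz : Az ^ p * Bz ^ q = Az ^ r * Bz ^ s := by
        have h' := congrArg (fun X : Matrix.SpecialLinearGroup (Fin 3) ℤ =>
          (X : Matrix (Fin 3) (Fin 3) ℤ)) h
        simpa using h'
      have hR : Ar ^ p * Br ^ q = Ar ^ r * Br ^ s := by
        have h2 := congrArg φ hz
        rw [_root_.map_mul, _root_.map_mul, _root_.map_pow, _root_.map_pow, _root_.map_pow,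
          _root_.map_pow, hφap, hφap] at h2
        rwa [← hAr, ← hBr] at h2
      have expand : ∀ a b : ℕ, (Ar ^ a * Br ^ b) * V
          = V * Matrix.diagonal (fun i => (t i ^ 2) ^ a * ((t i - 1) ^ 2) ^ b) := by
        intro a b
        rw [mul_assoc, conj_pow hBV, ← mul_assoc, conj_pow hAV, mul_assoc,
          Matrix.diagonal_pow, Matrix.diagonal_pow, Matrix.diagonal_mul_diagonal]
        simp only [Pi.pow_apply]
      have h3 : V * Matrix.diagonal (fun i => (t i ^ 2) ^ p * ((t i - 1) ^ 2) ^ q)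
          = V * Matrix.diagonal (fun i => (t i ^ 2) ^ r * ((t i - 1) ^ 2) ^ s) := by
        rw [← expand p q, ← expand r s, hR]
      have hd : Matrix.diagonal (fun i => (t i ^ 2) ^ p * ((t i - 1) ^ 2) ^ q)
          = Matrix.diagonal (fun i => (t i ^ 2) ^ r * ((t i - 1) ^ 2) ^ s) := by
        calc Matrix.diagonal (fun i => (t i ^ 2) ^ p * ((t i - 1) ^ 2) ^ q)
            = V⁻¹ * (V * Matrix.diagonal (fun i => (t i ^ 2) ^ p * ((t i - 1) ^ 2) ^ q)) := by
              rw [← mul_assoc, hVinvV, one_mul]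
          _ = V⁻¹ * (V * Matrix.diagonal (fun i => (t i ^ 2) ^ r * ((t i - 1) ^ 2) ^ s)) := by
              rw [h3]
          _ = _ := by rw [← mul_assoc, hVinvV, one_mul]
      exact Matrix.diagonal_eq_diagonal_iff.mp hd i
    first
    | -- Goal (3): freeness
      (intro m n h
       have hc : Commute A0 B0 := Subtype.ext (by
         simp only [Matrix.SpecialLinearGroup.coe_mul]
         exact hcommz)
       -- useful inequalities
       have hc1 : (1:ℝ) < t 0 ^ 2 := by rw [htv0]; nlinarith
       have hd0 : (0:ℝ) < (t 0 - 1) ^ 2 := by rw [htv0]; nlinarith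
       have hd1 : (t 0 - 1) ^ 2 < 1 := by rw [htv0]; nlinarith
       have he0 : (0:ℝ) < t 1 ^ 2 := by rw [htv1]; nlinarith
       have he1 : t 1 ^ 2 < 1 := by rw [htv1]; nlinarith
       have hf0 : (0:ℝ) < (t 1 - 1) ^ 2 := by rw [htv1]; nlinarith
       have hf1 : (t 1 - 1) ^ 2 < 1 := by rw [htv1]; nlinarith
       rcases le_or_gt 0 m with hm | hm <;> rcases le_or_gt 0 n with hn | hn
       · -- m ≥ 0, n ≥ 0
         lift m to ℕ using hm with p
         lift n to ℕ using hn with q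
         rw [zpow_natCast, zpow_natCast] at h
         have h' : A0 ^ p * B0 ^ q = A0 ^ 0 * B0 ^ 0 := by simpa using h
         obtain ⟨hp, hq⟩ := scalar_both he0 he1 hf0 hf1 (by simpa using key p q 0 0 h' 1)
         exact ⟨by exact_mod_cast hp, by exact_mod_cast hq⟩
       · -- m ≥ 0, n < 0
         exfalso
         lift m to ℕ using hm with p
         obtain ⟨q, hq⟩ : ∃ q : ℕ, -n = (q : ℤ) := ⟨(-n).toNat, by omega⟩
         have h2 : A0 ^ (p:ℤ) = B0 ^ ((q:ℤ)) := by
           rw [← hq]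
           have h5 := eq_inv_of_mul_eq_one_left h
           rw [h5, ← _root_.zpow_neg]
         rw [zpow_natCast, zpow_natCast] at h2
         have h' : A0 ^ p * B0 ^ 0 = A0 ^ 0 * B0 ^ q := by simpa using h2
         obtain ⟨hp0, hq0⟩ := scalar_mixed hc1 hd0 hd1 (by simpa using key p 0 0 q h' 0)
         omega
       · -- m < 0, n ≥ 0
         exfalso
         lift n to ℕ using hn with q
         obtain ⟨p, hp⟩ : ∃ p : ℕ, -m = (p : ℤ) := ⟨(-m).toNat, by omega⟩
         have h2 : A0 ^ ((p:ℤ)) = B0 ^ (q:ℤ) := by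
           rw [← hp]
           have h5 := eq_inv_of_mul_eq_one_right h
           rw [h5, ← _root_.zpow_neg]
         rw [zpow_natCast, zpow_natCast] at h2
         have h' : A0 ^ p * B0 ^ 0 = A0 ^ 0 * B0 ^ q := by simpa using h2
         obtain ⟨hp0, hq0⟩ := scalar_mixed hc1 hd0 hd1 (by simpa using key p 0 0 q h' 0)
         omega
       · -- m < 0, n < 0
         exfalso
         have h4 : A0 ^ (-m) * B0 ^ (-n) = 1 := by
           rw [_root_.zpow_neg, _root_.zpow_neg, ← _root_.mul_inv_rev, ← (hc.zpow_zpow m n).eq, h, inv_one]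
         obtain ⟨p, hp⟩ : ∃ p : ℕ, -m = (p : ℤ) := ⟨(-m).toNat, by omega⟩
         obtain ⟨q, hq⟩ : ∃ q : ℕ, -n = (q : ℤ) := ⟨(-n).toNat, by omega⟩
         rw [hp, hq, zpow_natCast, zpow_natCast] at h4
         have h' : A0 ^ p * B0 ^ q = A0 ^ 0 * B0 ^ 0 := by simpa using h4
         obtain ⟨hp0, hq0⟩ := scalar_both he0 he1 hf0 hf1 (by simpa using key p q 0 0 h' 1)
         omega)
    | -- Goal (2): the diagonalization
      (refine ⟨⟨V⁻¹, V, hVinvV, hVVinv⟩, (fun i => t i ^ 2), (fun i => (t i - 1) ^ 2),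
        ?_, ?_, ?_, ?_⟩
       · intro i
         have h3 : ∀ k : Fin 3, k = 0 ∨ k = 1 ∨ k = 2 := by decide
         rcases h3 i with rfl | rfl | rfl
         · simp only [htv0]; nlinarith
         · simp only [htv1]; nlinarith
         · simp only [htv2]; nlinarith
       · intro i
         have h3 : ∀ k : Fin 3, k = 0 ∨ k = 1 ∨ k = 2 := by decide
         rcases h3 i with rfl | rfl | rfl
         · simp only [htv0]; nlinarith
         · simp only [htv1]; nlinarith
         · simp only [htv2]; nlinarith
       · show V⁻¹ * Ar * V = _
         rw [mul_assoc, hAV, ← mul_assoc, hVinvV, one_mul]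
       · show V⁻¹ * Br * V = _
         rw [mul_assoc, hBV, ← mul_assoc, hVinvV, one_mul]) }
end

section
/- Let α ∈ ℝ be a root of the polynomial x³ − 3x + 1. Then α·(3 − α²) = 1 and (1 − α)·(2 − α − α²) = 1, so α and 1 − α are units of the ring ℤ[α]; moreover α and 1 − α are multiplicatively independent: for all integers m, n, if αᵐ·(1 − α)ⁿ = 1 then m = n = 0. -/
/-!
The substitution `x ↦ 1 / (1 - x)` permutes the roots of `x³ - 3x + 1`. As this cubic has no
rational root it is irreducible over `ℚ`, so a relation `αᵐ (1 - α)ⁿ = 1` also holds for the root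
`β = (1 - α)⁻¹`, where `1 - β = -α / (1 - α)`. In absolute values the two relations read
`aᵐ bⁿ = 1` and `b⁻ᵐ (a / b)ⁿ = 1`; eliminating `a` gives `b ^ (m² + mn + n²) = 1` with
`b = |1 - α| ≠ 1`, and the positive definite form `m² + mn + n²` vanishes only at `m = n = 0`.
-/

open Polynomial

theorem irreducible_X_pow_three_sub_three_mul_X_add_one :
    Irreducible (X ^ 3 - 3 * X + 1 : ℚ[X]) := by
  have hdeg : (X ^ 3 - 3 * X + 1 : ℚ[X]).natDegree = 3 := by compute_degree!
  refine irreducible_of_degree_le_three_of_not_isRoot (by simp [hdeg]) fun r hr => ?_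
  have hmonic : (X ^ 3 - 3 * X + 1 : ℤ[X]).Monic := by monicity!
  obtain ⟨k, rfl⟩ := isInteger_of_is_root_of_monic hmonic (r := r) (by simpa [map_ofNat] using hr)
  have hk : k ^ 3 - 3 * k + 1 = 0 := by
    exact_mod_cast (by simpa using hr : ((k ^ 3 - 3 * k + 1 : ℤ) : ℚ) = 0)
  have hunit : k * (3 - k ^ 2) = 1 := by linear_combination -hk
  rcases Int.eq_one_or_neg_one_of_mul_eq_one hunit with rfl | rfl <;> norm_num at hk

theorem zpow_mul_one_sub_zpow_eq_one_of_aeval_eq_zero {K L : Type*} [Field K] [Field L]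
    [Algebra K L] {p : K[X]} (hp : Irreducible p) {x y : L} (hx : aeval x p = 0)
    (hy : aeval y p = 0) {m n : ℤ} (h : x ^ m * (1 - x) ^ n = 1) :
    y ^ m * (1 - y) ^ n = 1 := by
  have := Fact.mk hp
  rw [aeval_def] at hx hy
  have hroot : AdjoinRoot.root p ^ m * (1 - AdjoinRoot.root p) ^ n = 1 := by
    apply (AdjoinRoot.lift (algebraMap K L) x hx).injective
    simpa [AdjoinRoot.lift_root] using h
  simpa [AdjoinRoot.lift_root] using congr(AdjoinRoot.lift (algebraMap K L) y hy $hroot)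

theorem zpow_eq_one_of_zpow_mul_zpow_eq_one {G₀ : Type*} [CommGroupWithZero G₀] {a b : G₀}
    (ha : a ≠ 0) (hb : b ≠ 0) {m n : ℤ} (h₁ : a ^ m * b ^ n = 1) (h₂ : b⁻¹ ^ m * (a * b⁻¹) ^ n = 1) :
    b ^ (m ^ 2 + m * n + n ^ 2) = 1 := by
  calc b ^ (m ^ 2 + m * n + n ^ 2)
      = (a ^ m * b ^ n) ^ n * (b⁻¹ ^ m * (a * b⁻¹) ^ n) ^ (-m) := by
        simp only [mul_zpow, inv_zpow', ← zpow_mul, zpow_neg]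
        field_simp
        rw [mul_comm, mul_comm n m]
        simp only [mul_assoc, ← zpow_add₀ hb]
        ring_nf
    _ = 1 := by rw [h₁, h₂, one_zpow, one_zpow, one_mul]

/-- Let `α ∈ ℝ` be a root of `x³ − 3x + 1`.  Then
`α·(3 − α²) = 1` and `(1 − α)·(2 − α − α²) = 1`, so `α` and `1 − α` are units (of
`ℤ[α]`); moreover `α` and `1 − α` are multiplicatively independent: for all integers
`m, n`, if `αᵐ·(1 − α)ⁿ = 1` then `m = n = 0`. -/
theorem stmt13
    (α : ℝ) (hα : α ^ 3 - 3 * α + 1 = 0) :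
    α * (3 - α ^ 2) = 1 ∧
    (1 - α) * (2 - α - α ^ 2) = 1 ∧
    ∀ m n : ℤ, α ^ m * (1 - α) ^ n = 1 → m = 0 ∧ n = 0 := by
  refine ⟨by linear_combination -hα, by linear_combination hα, fun m n h => ?_⟩
  have hα₀ : α ≠ 0 := fun h => by norm_num [h] at hα
  have hα₁ : 1 - α ≠ 0 := fun h => by norm_num [show α = 1 by linarith] at hα
  have hβ : aeval (1 - α)⁻¹ (X ^ 3 - 3 * X + 1 : ℚ[X]) = 0 := by
    simp only [map_add, aeval_sub, map_pow, aeval_X, inv_pow, map_mul, map_ofNat, map_one]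
    field_simp
    linear_combination -hα
  have hβ_rel := zpow_mul_one_sub_zpow_eq_one_of_aeval_eq_zero
    irreducible_X_pow_three_sub_three_mul_X_add_one (by simpa [map_ofNat] using hα) hβ h
  have h₁ : |α| ^ m * |1 - α| ^ n = 1 := by simpa [abs_zpow] using congr(|$h|)
  have h₂ : |1 - α|⁻¹ ^ m * (|α| * |1 - α|⁻¹) ^ n = 1 := by
    have h1β : 1 - (1 - α)⁻¹ = -α * (1 - α)⁻¹ := by field_simp; ring
    simpa [abs_zpow, h1β, abs_mul, abs_inv] using congr(|$hβ_rel|)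
  have hk := zpow_eq_one_of_zpow_mul_zpow_eq_one (abs_ne_zero.2 hα₀) (abs_ne_zero.2 hα₁) h₁ h₂
  have habs : |1 - α| ≠ 1 := by
    intro h
    rcases abs_eq zero_le_one |>.1 h with h | h
    · exact hα₀ (by linarith)
    · norm_num [show α = 2 by linarith] at hα
  rw [zpow_eq_one_iff_right₀ (abs_nonneg _) habs] at hk
  constructor <;> nlinarith [sq_nonneg (m + n), sq_nonneg m, sq_nonneg n]
end

section
/- Let 𝔫₄ be the 4-dimensional real nilpotent Lie algebra with basis x₁, x₂, x₃, x₄ and only nonzero brackets ⁅x₄, x₃⁆ = x₂, ⁅x₄, x₂⁆ = x₁. Then every derivation D of 𝔫₄ whose underlying linear map has trace zero can be written as D = ad(w) + E, where w ∈ 𝔫₄ and E is the derivation determined by real numbers a, b, c via E(x₁) = 2a·x₁, E(x₂) = −a·x₂, E(x₃) = b·x₁ − 4a·x₃, E(x₄) = c·x₃ + 3a·x₄. -/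
/-!
Write `dᵢⱼ` for the matrix of `D` in the basis `x₁, …, x₄` (indexed `0, …, 3`). Applying `D` to
`⁅x₄, x₃⁆ = x₂`, `⁅x₄, x₂⁆ = x₁` and `⁅x₃, x₂⁆ = 0` expresses `D x₂` and `D x₁` through the columns
of `D x₃, D x₄`, and gives `d₃₂ = 0`; the diagonal is then `(s + 2t, s + t, s, t)` with
`s = d₂₂`, `t = d₃₃`. The remaining entries `d₀₃, d₁₃, d₁₂` are exactly those of an inner
derivation `ad w`, leaving `β = d₀₂` and `c = d₂₃`. Trace zero reads `3s + 4t = 0`, so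
`a = t / 3` gives `s = -4a`, `s + t = -a` and `s + 2t = 2a`.
-/

open Module

variable {R L : Type*} [CommRing R] [LieRing L] [LieAlgebra R L]

structure IsN4Basis (b : Basis (Fin 4) R L) : Prop where
  lie_three_two : ⁅b 3, b 2⁆ = b 1
  lie_three_one : ⁅b 3, b 1⁆ = b 0
  lie_three_zero : ⁅b 3, b 0⁆ = 0
  lie_two_one : ⁅b 2, b 1⁆ = 0
  lie_two_zero : ⁅b 2, b 0⁆ = 0
  lie_one_zero : ⁅b 1, b 0⁆ = 0

namespace IsN4Basis

variable {b : Basis (Fin 4) R L}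

theorem lie_eq (hb : IsN4Basis b) (x y : L) :
    ⁅x, y⁆ = (b.repr x 3 * b.repr y 1 - b.repr x 1 * b.repr y 3) • b 0 +
      (b.repr x 3 * b.repr y 2 - b.repr x 2 * b.repr y 3) • b 1 := by
  have h23 : ⁅b 2, b 3⁆ = -b 1 := by rw [← lie_skew, hb.lie_three_two]
  have h13 : ⁅b 1, b 3⁆ = -b 0 := by rw [← lie_skew, hb.lie_three_one]
  have h03 : ⁅b 0, b 3⁆ = 0 := by rw [← lie_skew, hb.lie_three_zero, neg_zero]
  have h12 : ⁅b 1, b 2⁆ = 0 := by rw [← lie_skew, hb.lie_two_one, neg_zero]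
  have h02 : ⁅b 0, b 2⁆ = 0 := by rw [← lie_skew, hb.lie_two_zero, neg_zero]
  have h01 : ⁅b 0, b 1⁆ = 0 := by rw [← lie_skew, hb.lie_one_zero, neg_zero]
  conv_lhs => rw [← b.sum_repr x, ← b.sum_repr y]
  simp only [Fin.sum_univ_four, add_lie, lie_add, smul_lie, lie_smul, lie_self, h23, h13, h03,
    h12, h02, h01, hb.lie_three_two, hb.lie_three_one, hb.lie_three_zero, hb.lie_two_one,
    hb.lie_two_zero, hb.lie_one_zero]
  module

variable (D : LieDerivation R L L)

theorem derivation_apply_one (hb : IsN4Basis b) :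
    D (b 1) = b.repr (D (b 2)) 1 • b 0 + (b.repr (D (b 2)) 2 + b.repr (D (b 3)) 3) • b 1 := by
  conv_lhs => rw [← hb.lie_three_two]
  rw [D.apply_lie_eq_add, hb.lie_eq, hb.lie_eq]
  simp only [Basis.repr_self_apply, Fin.reduceEq, if_true, if_false]
  module

theorem derivation_apply_zero (hb : IsN4Basis b) :
    D (b 0) = (b.repr (D (b 2)) 2 + 2 * b.repr (D (b 3)) 3) • b 0 := by
  conv_lhs => rw [← hb.lie_three_one]
  rw [D.apply_lie_eq_add, hb.lie_eq, hb.lie_eq, hb.derivation_apply_one]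
  simp only [Basis.repr_self_apply, Fin.reduceEq, if_true, if_false, map_add, map_smul,
    Finsupp.add_apply, Finsupp.smul_apply, smul_eq_mul]
  module

theorem repr_derivation_two_three (hb : IsN4Basis b) : b.repr (D (b 2)) 3 = 0 := by
  have h := D.apply_lie_eq_add (b 2) (b 1)
  rw [hb.lie_two_one, map_zero, hb.lie_eq, hb.lie_eq, hb.derivation_apply_one] at h
  simpa using congr(b.repr $h 0).symm

theorem trace_derivation (hb : IsN4Basis b) :
    LinearMap.trace R L D = 3 * b.repr (D (b 2)) 2 + 4 * b.repr (D (b 3)) 3 := by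
  rw [LinearMap.trace_eq_matrix_trace R b, Matrix.trace, Fin.sum_univ_four]
  simp only [Matrix.diag_apply, LinearMap.toMatrix_apply, LieDerivation.coeFn_coe,
    hb.derivation_apply_zero, hb.derivation_apply_one, Basis.repr_self_apply, Fin.reduceEq,
    if_true, if_false, map_add, map_smul, Finsupp.add_apply, Finsupp.smul_apply, smul_eq_mul]
  ring

theorem exists_eq_lie_add (hb : IsN4Basis b) :
    ∃ w : L, ∃ β c : R,
      D (b 0) = ⁅w, b 0⁆ + (b.repr (D (b 2)) 2 + 2 * b.repr (D (b 3)) 3) • b 0 ∧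
      D (b 1) = ⁅w, b 1⁆ + (b.repr (D (b 2)) 2 + b.repr (D (b 3)) 3) • b 1 ∧
      D (b 2) = ⁅w, b 2⁆ + β • b 0 + b.repr (D (b 2)) 2 • b 2 ∧
      D (b 3) = ⁅w, b 3⁆ + c • b 2 + b.repr (D (b 3)) 3 • b 3 := by
  refine ⟨-b.repr (D (b 3)) 0 • b 1 - b.repr (D (b 3)) 1 • b 2 + b.repr (D (b 2)) 1 • b 3,
    b.repr (D (b 2)) 0, b.repr (D (b 3)) 2, ?_, ?_, ?_, ?_⟩
  all_goals
    conv_lhs => rw [← b.sum_repr (D _), Fin.sum_univ_four]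
    simp only [hb.lie_eq, Basis.repr_self_apply, Fin.reduceEq, if_true, if_false, map_add,
      map_smul, map_sub, Finsupp.add_apply, Finsupp.smul_apply, Finsupp.sub_apply, smul_eq_mul,
      hb.derivation_apply_zero, hb.derivation_apply_one, hb.repr_derivation_two_three]
    module

end IsN4Basis

/-- Let `𝔫₄` be the 4-dimensional real nilpotent Lie algebra with
basis `x₁, x₂, x₃, x₄ = b 0, b 1, b 2, b 3` and only nonzero brackets
`⁅x₄, x₃⁆ = x₂`, `⁅x₄, x₂⁆ = x₁`.  Then every derivation `D` of `𝔫₄` whose underlying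
linear map has trace zero can be written as `D = ad(w) + E` where `w ∈ 𝔫₄` and `E` is
the derivation determined by reals `a, β, c` via `E x₁ = 2a·x₁`, `E x₂ = −a·x₂`,
`E x₃ = β·x₁ − 4a·x₃`, `E x₄ = c·x₃ + 3a·x₄`. -/
theorem stmt14
    (L : Type) [LieRing L] [LieAlgebra ℝ L]
    (b : Module.Basis (Fin 4) ℝ L)
    (h32 : ⁅b 3, b 2⁆ = b 1) (h31 : ⁅b 3, b 1⁆ = b 0) (h30 : ⁅b 3, b 0⁆ = 0)
    (h21 : ⁅b 2, b 1⁆ = 0) (h20 : ⁅b 2, b 0⁆ = 0) (h10 : ⁅b 1, b 0⁆ = 0)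
    (D : LieDerivation ℝ L L)
    (htr : LinearMap.trace ℝ L D.toLinearMap = 0) :
    ∃ w : L, ∃ a β c : ℝ,
      D (b 0) = ⁅w, b 0⁆ + (2 * a) • b 0 ∧
      D (b 1) = ⁅w, b 1⁆ + (-a) • b 1 ∧
      D (b 2) = ⁅w, b 2⁆ + β • b 0 + (-(4 * a)) • b 2 ∧
      D (b 3) = ⁅w, b 3⁆ + c • b 2 + (3 * a) • b 3 := by
  have hb : IsN4Basis b := ⟨h32, h31, h30, h21, h20, h10⟩
  obtain ⟨w, β, c, h0, h1, h2, h3⟩ := hb.exists_eq_lie_add D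
  rw [hb.trace_derivation] at htr
  set t := b.repr (D (b 3)) 3
  refine ⟨w, t / 3, β, c, ?_, ?_, ?_, ?_⟩
  · rw [h0]; congr 2; linarith
  · rw [h1]; congr 2; linarith
  · rw [h2]; congr 2; linarith
  · rw [h3]; congr 2; ring
end

section
/- Let 𝔫 = ℝ ⊕ 𝔥₃ be the 4-dimensional real nilpotent Lie algebra with basis y, x₁, x₂, x₃ in which the only nonzero bracket among basis vectors is ⁅x₃, x₂⁆ = x₁. Let D be a derivation of 𝔫 such that the underlying linear map has trace zero, D(x₁) = 0, and D(y) lies in the span of x₁ (these conditions say that D is traceless on the derived algebra span{x₁} = [𝔫,𝔫] and on the center span{x₁, y} = Z(𝔫)). Then there exist w ∈ 𝔫 and real numbers a, b, c, d, e, f such that D = ad(w) + E, where E is the linear map with E(y) = d·x₁, E(x₁) = 0, E(x₂) = e·y + a·x₂ + c·x₃, and E(x₃) = f·y + b·x₂ − a·x₃. -/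
/-!
Since `x₁` is central and `⁅x₃, x₂⁆ = x₁`, the inner derivation `ad(c₁ x₃ - e₁ x₂)` sends
`x₂ ↦ c₁ x₁`, `x₃ ↦ e₁ x₁` and kills the centre, so it absorbs the `x₁`-components of `D x₂`
and `D x₃`. What remains of `D` has the shape of `E`; the only constraint, that the
`x₂`-coefficient of `D x₂` and the `x₃`-coefficient of `D x₃` are opposite, is the vanishing
of the trace, because `D` has zero diagonal entries at `y` and `x₁`.
-/

open Module

theorem LinearMap.trace_eq_sum_repr_apply {R M ι : Type*} [CommRing R] [AddCommGroup M]
    [Module R M] [Fintype ι] [DecidableEq ι] (b : Basis ι R M) (f : M →ₗ[R] M) :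
    LinearMap.trace R M f = ∑ i, b.repr (f (b i)) i := by
  rw [LinearMap.trace_eq_matrix_trace R b, Matrix.trace]
  simp only [Matrix.diag_apply, LinearMap.toMatrix_apply]

theorem Module.Basis.eq_sum_four {R M : Type*} [CommRing R] [AddCommGroup M] [Module R M]
    (b : Basis (Fin 4) R M) (v : M) :
    v = b.repr v 0 • b 0 + b.repr v 1 • b 1 + b.repr v 2 • b 2 + b.repr v 3 • b 3 := by
  rw [← Fin.sum_univ_four (fun i ↦ b.repr v i • b i), b.sum_repr]

theorem Module.Basis.repr_add_repr_eq_zero_of_trace_eq_zero {R M : Type*} [CommRing R]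
    [AddCommGroup M] [Module R M] (b : Basis (Fin 4) R M) (f : M →ₗ[R] M)
    (htr : LinearMap.trace R M f = 0) (h1 : f (b 1) = 0) (h0 : f (b 0) ∈ Submodule.span R {b 1}) :
    b.repr (f (b 2)) 2 + b.repr (f (b 3)) 3 = 0 := by
  obtain ⟨d, hd⟩ := Submodule.mem_span_singleton.mp h0
  rw [LinearMap.trace_eq_sum_repr_apply b, Fin.sum_univ_four, h1, ← hd] at htr
  simpa [Finsupp.single_apply] using htr

theorem stmt15_general
    (L : Type) [LieRing L] [LieAlgebra ℝ L]
    (b : Module.Basis (Fin 4) ℝ L)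
    (h32 : ⁅b 3, b 2⁆ = b 1)
    (h31 : ⁅b 3, b 1⁆ = 0) (h30 : ⁅b 3, b 0⁆ = 0)
    (h21 : ⁅b 2, b 1⁆ = 0) (h20 : ⁅b 2, b 0⁆ = 0)
    (D : LieDerivation ℝ L L)
    (htr : LinearMap.trace ℝ L D.toLinearMap = 0)
    (hDx1 : D (b 1) = 0)
    (hDy : D (b 0) ∈ Submodule.span ℝ {b 1}) :
    ∃ w : L, ∃ a β c d e f : ℝ,
      D (b 0) = ⁅w, b 0⁆ + d • b 1 ∧
      D (b 1) = ⁅w, b 1⁆ ∧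
      D (b 2) = ⁅w, b 2⁆ + e • b 0 + a • b 2 + c • b 3 ∧
      D (b 3) = ⁅w, b 3⁆ + f • b 0 + β • b 2 + (-a) • b 3 := by
  obtain ⟨d, hd⟩ := Submodule.mem_span_singleton.mp hDy
  have htrace := b.repr_add_repr_eq_zero_of_trace_eq_zero D.toLinearMap htr hDx1 hDy
  simp only [LieDerivation.coeFn_coe] at htrace
  set c := b.repr (D (b 2))
  set e := b.repr (D (b 3))
  have h23 : ⁅b 2, b 3⁆ = -b 1 := by rw [← lie_skew, h32]
  refine ⟨(-e 1) • b 2 + c 1 • b 3, c 2, e 2, c 3, d, c 0, e 0, ?_, ?_, ?_, ?_⟩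
  · rw [← hd, add_lie, smul_lie, smul_lie, h20, h30]
    module
  · rw [hDx1, add_lie, smul_lie, smul_lie, h21, h31]
    module
  · rw [b.eq_sum_four (D (b 2)), add_lie, smul_lie, smul_lie, h32, lie_self]
    module
  · rw [b.eq_sum_four (D (b 3)), add_lie, smul_lie, smul_lie, h23, lie_self,
      eq_neg_of_add_eq_zero_right htrace]
    module

/-- Let `𝔫 = ℝ ⊕ 𝔥₃` be the 4-dimensional real nilpotent Lie
algebra with basis `y, x₁, x₂, x₃ = b 0, b 1, b 2, b 3` whose only nonzero bracket
among basis vectors is `⁅x₃, x₂⁆ = x₁`.  Let `D` be a derivation of `𝔫` with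
traceless underlying linear map such that `D x₁ = 0` and `D y ∈ span{x₁}` (so `D` is
traceless on `[𝔫,𝔫] = span{x₁}` and on `Z(𝔫) = span{x₁, y}`).  Then there exist
`w ∈ 𝔫` and reals `a, β, c, d, e, f` with `D = ad(w) + E`, where `E y = d·x₁`,
`E x₁ = 0`, `E x₂ = e·y + a·x₂ + c·x₃`, `E x₃ = f·y + β·x₂ − a·x₃`. -/
theorem stmt15
    (L : Type) [LieRing L] [LieAlgebra ℝ L]
    (b : Module.Basis (Fin 4) ℝ L)
    (h32 : ⁅b 3, b 2⁆ = b 1)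
    (h31 : ⁅b 3, b 1⁆ = 0) (h30 : ⁅b 3, b 0⁆ = 0)
    (h21 : ⁅b 2, b 1⁆ = 0) (h20 : ⁅b 2, b 0⁆ = 0) (h10 : ⁅b 1, b 0⁆ = 0)
    (D : LieDerivation ℝ L L)
    (htr : LinearMap.trace ℝ L D.toLinearMap = 0)
    (hDx1 : D (b 1) = 0)
    (hDy : D (b 0) ∈ Submodule.span ℝ {b 1}) :
    ∃ w : L, ∃ a β c d e f : ℝ,
      D (b 0) = ⁅w, b 0⁆ + d • b 1 ∧
      D (b 1) = ⁅w, b 1⁆ ∧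
      D (b 2) = ⁅w, b 2⁆ + e • b 0 + a • b 2 + c • b 3 ∧
      D (b 3) = ⁅w, b 3⁆ + f • b 0 + β • b 2 + (-a) • b 3 :=
  stmt15_general L b h32 h31 h30 h21 h20 D htr hDx1 hDy
end

section
/- Let p ∈ ℤ[X] be a monic polynomial of degree 4 with constant coefficient 1, and let r ∈ ℝ be a root of p of multiplicity at least 3, i.e. (X − r)³ divides p in ℝ[X]. Then r = 1 or r = −1. -/
/-!
Over `ℝ` the quartic splits as `(X - r)³ (X - s)`. Eliminating `s` from the rational
coefficients of `X³, X², X` leaves a linear relation `(3a² - 8b) r = 6c - ab` and the identity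
`3 (4r + a)² = 3a² - 8b`, so `r` is rational in either case. A rational root of a monic integer
polynomial is an integer dividing the constant coefficient `1`.
-/

open Polynomial

theorem Polynomial.Monic.exists_eq_X_sub_C_pow_mul_X_sub_C {R : Type*} [CommRing R] [Nontrivial R]
    {f : R[X]} (hf : f.Monic) {k : ℕ} (hdeg : f.natDegree = k + 1) {r : R}
    (hdvd : (X - C r) ^ k ∣ f) : ∃ s, f = (X - C r) ^ k * (X - C s) := by
  obtain ⟨g, rfl⟩ := hdvd
  have hpow : ((X - C r) ^ k).Monic := (monic_X_sub_C r).pow k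
  have hg : g.Monic := hpow.of_mul_monic_left hf
  have hgdeg : g.natDegree = 1 := by
    rw [hpow.natDegree_mul hg, (monic_X_sub_C r).natDegree_pow, natDegree_X_sub_C] at hdeg
    omega
  refine ⟨-g.coeff 0, ?_⟩
  rw [map_neg, sub_neg_eq_add, ← hg.eq_X_add_C hgdeg]

theorem X_sub_C_pow_three_mul_X_sub_C {R : Type*} [CommRing R] (r s : R) :
    (X - C r) ^ 3 * (X - C s) =
      X ^ 4 + C (-(3 * r + s)) * X ^ 3 + C (3 * r ^ 2 + 3 * r * s) * X ^ 2
        + C (-(r ^ 3 + 3 * r ^ 2 * s)) * X + C (r ^ 3 * s) := by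
  simp only [map_add, map_mul, map_neg, map_pow, map_ofNat]
  ring

theorem exists_ratCast_eq_of_cube_coeffs {K : Type*} [Field K] [CharZero K] {r s : K} {a b c : ℚ}
    (ha : -(3 * r + s) = a) (hb : 3 * r ^ 2 + 3 * r * s = b) (hc : -(r ^ 3 + 3 * r ^ 2 * s) = c) :
    ∃ q : ℚ, (q : K) = r := by
  obtain rfl : s = -a - 3 * r := by linear_combination -ha
  have hlin : ((3 * a ^ 2 - 8 * b : ℚ) : K) * r = (6 * c - a * b : ℚ) := by
    push_cast
    linear_combination 6 * hc - (a - 8 * r) * hb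
  have hsq : 3 * (4 * r + a) ^ 2 = ((3 * a ^ 2 - 8 * b : ℚ) : K) := by
    push_cast
    linear_combination -8 * hb
  by_cases ht : 3 * a ^ 2 - 8 * b = 0
  · refine ⟨-a / 4, ?_⟩
    rw [ht, Rat.cast_zero] at hsq
    have hr : 4 * r + a = 0 := by simpa using hsq
    push_cast
    linear_combination -hr / 4
  · refine ⟨(6 * c - a * b) / (3 * a ^ 2 - 8 * b), ?_⟩
    rw [Rat.cast_div, ← hlin, mul_div_cancel_left₀ _ (Rat.cast_ne_zero.mpr ht)]

theorem exists_ratCast_eq_of_X_sub_C_pow_three_dvd {K : Type*} [Field K] [CharZero K]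
    {f : ℚ[X]} (hf : f.Monic) (hdeg : f.natDegree = 4) {r : K}
    (hdvd : (X - C r) ^ 3 ∣ f.map (algebraMap ℚ K)) : ∃ q : ℚ, (q : K) = r := by
  obtain ⟨s, hs⟩ := (hf.map (algebraMap ℚ K)).exists_eq_X_sub_C_pow_mul_X_sub_C
    (by rw [natDegree_map, hdeg]) hdvd
  rw [X_sub_C_pow_three_mul_X_sub_C] at hs
  have hcoeff (n : ℕ) := congrArg (coeff · n) hs
  simp only [coeff_map, coeff_add, coeff_C_mul, coeff_X_pow, coeff_X, coeff_C] at hcoeff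
  exact exists_ratCast_eq_of_cube_coeffs (a := f.coeff 3) (b := f.coeff 2) (c := f.coeff 1)
    (by simpa using (hcoeff 3).symm) (by simpa using (hcoeff 2).symm)
    (by simpa using (hcoeff 1).symm)

theorem Polynomial.Monic.eq_one_or_eq_neg_one_of_aeval_eq_zero {p : ℤ[X]} (hp : p.Monic)
    (hconst : p.coeff 0 = 1) {q : ℚ} (hq : aeval q p = 0) : q = 1 ∨ q = -1 := by
  obtain ⟨n, rfl, hn⟩ := exists_integer_of_is_root_of_monic hp hq
  rw [hconst] at hn
  rcases Int.isUnit_iff.mp (isUnit_of_dvd_one hn) with rfl | rfl <;> simp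

/-- Let `p ∈ ℤ[X]` be a monic polynomial of degree `4` with
constant coefficient `1`, and let `r ∈ ℝ` be a root of `p` of multiplicity at least
`3`, i.e. `(X − r)³` divides (the image of) `p` in `ℝ[X]`.  Then `r = 1` or `r = −1`. -/
theorem stmt19
    (p : Polynomial ℤ) (hmonic : p.Monic) (hdeg : p.natDegree = 4)
    (hconst : p.coeff 0 = 1)
    (r : ℝ)
    (hroot : (Polynomial.X - Polynomial.C r) ^ 3 ∣ p.map (Int.castRingHom ℝ)) :
    r = 1 ∨ r = -1 := by
  have hmap :
      p.map (Int.castRingHom ℝ) = (p.map (algebraMap ℤ ℚ)).map (algebraMap ℚ ℝ) := by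
    rw [map_map]; congr 1
  obtain ⟨q, rfl⟩ := exists_ratCast_eq_of_X_sub_C_pow_three_dvd (hmonic.map _)
    (by rwa [natDegree_map_eq_of_injective (algebraMap ℤ ℚ).injective_int]) (hmap ▸ hroot)
  have hq : aeval q p = 0 := by
    have hreal : (p.map (Int.castRingHom ℝ)).IsRoot (q : ℝ) :=
      dvd_iff_isRoot.mp ((dvd_pow_self _ three_ne_zero).trans hroot)
    apply (algebraMap ℚ ℝ).injective
    rw [map_zero, ← aeval_algebraMap_apply]
    simpa [IsRoot, eval_map, aeval_def] using hreal
  rcases hmonic.eq_one_or_eq_neg_one_of_aeval_eq_zero hconst hq with rfl | rfl <;> simp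
end
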